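/- arXiv:1004.2847 — 14 statements merged into one kernel-verified Lean document; each statement's English description precedes it below -/
import Mathlib

section
/- Let σ be a Frobenius splitting of a commutative ring R of prime characteristic p. Then every ideal of R compatibly split under σ is a radical ideal; moreover, if the ideals I and J are compatibly split under σ, then both the sum I + J and the intersection I ∩ J are compatibly split under σ. -/
/-!
Specialising `σ (a ^ p * b) = a * σ b` to `b = 1` shows that `σ` is a left inverse of the
`p`-th power map. Hence an ideal `I` with `σ I ⊆ I` satisfies `a ^ p ∈ I → a ∈ I`, and since
`p > 1` this already makes `I` radical.
-/

theorem Function.leftInverse_pow_of_frobenius_semilinear {R : Type*} [CommRing R] {p : ℕ}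
    {σ : R → R} (hsemilin : ∀ a b : R, σ (a ^ p * b) = a * σ b) (hone : σ 1 = 1) :
    Function.LeftInverse σ (· ^ p) := fun a => by
  simpa only [mul_one, hone] using hsemilin a 1

theorem Ideal.isRadical_of_leftInverse_pow {R : Type*} [CommRing R] {p : ℕ} (hp : 1 < p)
    {σ : R → R} (hσ : Function.LeftInverse σ (· ^ p)) {I : Ideal R}
    (hI : ∀ a ∈ I, σ a ∈ I) : I.IsRadical :=
  (I.isRadical_iff_pow_one_lt p hp).2 fun a ha => hσ a ▸ hI _ ha

theorem Submodule.apply_mem_sup_of_map_add {R M : Type*} [Semiring R] [AddCommMonoid M]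
    [Module R M] {σ : M → M} (hadd : ∀ a b : M, σ (a + b) = σ a + σ b) {N N' : Submodule R M}
    (hN : ∀ a ∈ N, σ a ∈ N) (hN' : ∀ a ∈ N', σ a ∈ N') : ∀ a ∈ N ⊔ N', σ a ∈ N ⊔ N' := by
  intro a ha
  obtain ⟨x, hx, y, hy, rfl⟩ := Submodule.mem_sup.1 ha
  exact hadd x y ▸ Submodule.add_mem_sup (hN x hx) (hN' y hy)

theorem compatibly_split_radical_sum_inter_general
    {R : Type*} [CommRing R] (p : ℕ) (hp : p.Prime)
    (σ : R → R)
    (hadd : ∀ a b : R, σ (a + b) = σ a + σ b)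
    (hsemilin : ∀ a b : R, σ (a ^ p * b) = a * σ b)
    (hone : σ 1 = 1) :
    (∀ I : Ideal R, (∀ a ∈ I, σ a ∈ I) → I.radical = I) ∧
    (∀ I J : Ideal R, (∀ a ∈ I, σ a ∈ I) → (∀ a ∈ J, σ a ∈ J) →
      (∀ a ∈ I + J, σ a ∈ I + J) ∧ (∀ a ∈ I ⊓ J, σ a ∈ I ⊓ J)) := by
  have hσ := Function.leftInverse_pow_of_frobenius_semilinear hsemilin hone
  refine ⟨fun I hI => (I.isRadical_of_leftInverse_pow hp.one_lt hσ hI).radical,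
    fun I J hI hJ => ⟨?_, fun a ha => ⟨hI a ha.1, hJ a ha.2⟩⟩⟩
  rw [Submodule.add_eq_sup]
  exact Submodule.apply_mem_sup_of_map_add hadd hI hJ

/-- Let `σ` be a Frobenius splitting of a commutative ring `R` of prime characteristic `p`.
Then every ideal of `R` compatibly split under `σ` is a radical ideal; moreover, if the
ideals `I` and `J` are compatibly split under `σ`, then both `I + J` and `I ⊓ J` are
compatibly split under `σ`. -/
theorem compatibly_split_radical_sum_inter
    {R : Type*} [CommRing R] (p : ℕ) (hp : p.Prime) [CharP R p]
    (σ : R → R)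
    (hadd : ∀ a b : R, σ (a + b) = σ a + σ b)
    (hsemilin : ∀ a b : R, σ (a ^ p * b) = a * σ b)
    (hone : σ 1 = 1) :
    (∀ I : Ideal R, (∀ a ∈ I, σ a ∈ I) → I.radical = I) ∧
    (∀ I J : Ideal R, (∀ a ∈ I, σ a ∈ I) → (∀ a ∈ J, σ a ∈ J) →
      (∀ a ∈ I + J, σ a ∈ I + J) ∧ (∀ a ∈ I ⊓ J, σ a ∈ I ⊓ J)) :=
  compatibly_split_radical_sum_inter_general p hp σ hadd hsemilin hone
end

section
/- Let σ be a Frobenius splitting of a commutative ring R of prime characteristic p and let I be an ideal of R compatibly split under σ. Then every minimal prime ideal of R over I is compatibly split under σ. -/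
/-!
Localizing at the minimal prime `P`, the ideal `J = IR_P ∩ R` is again compatibly split, because
`σ (s ^ p * x) = s * σ x` lets the denominators `s ∉ P` pass through `σ`. A compatibly split ideal
is radical: `a = σ (a ^ p * 1)`, so `a ^ p ∈ J` forces `a ∈ J`. Since `P` is minimal over `I`,
the radical of `J` is `P`, hence `J = P`.
-/

section FrobeniusSplit

variable {R : Type*} [CommRing R] {p : ℕ} {σ : R → R}
  (hsemilin : ∀ a b : R, σ (a ^ p * b) = a * σ b) (hone : σ 1 = 1)

include hsemilin hone in
theorem Ideal.mem_of_pow_pow_mem_of_compatiblySplit {J : Ideal R} (hJ : ∀ a ∈ J, σ a ∈ J) {a : R}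
    (k : ℕ) (ha : a ^ p ^ k ∈ J) : a ∈ J := by
  induction k with
  | zero => simpa using ha
  | succ k ih =>
    refine ih ?_
    have : σ ((a ^ p ^ k) ^ p * 1) ∈ J := hJ _ (by rwa [mul_one, ← pow_mul, ← pow_succ])
    rwa [hsemilin, hone, mul_one] at this

include hsemilin hone in
theorem Ideal.isRadical_of_compatiblySplit (hp : 1 < p) {J : Ideal R}
    (hJ : ∀ a ∈ J, σ a ∈ J) : J.IsRadical := by
  rintro a ⟨n, ha⟩
  exact J.mem_of_pow_pow_mem_of_compatiblySplit hsemilin hone hJ n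
    (J.pow_mem_of_pow_mem ha (Nat.lt_pow_self hp).le)

include hsemilin in
theorem IsLocalization.compatiblySplit_under_map (hp : p ≠ 0) (M : Submonoid R)
    (A : Type*) [CommRing A] [Algebra R A] [IsLocalization M A] {I : Ideal R}
    (hI : ∀ a ∈ I, σ a ∈ I) :
    ∀ a ∈ (I.map (algebraMap R A)).under R, σ a ∈ (I.map (algebraMap R A)).under R := by
  simp only [Ideal.mem_under, IsLocalization.algebraMap_mem_map_algebraMap_iff M]
  rintro x ⟨m, hm, hmx⟩
  refine ⟨m, hm, ?_⟩
  rw [← hsemilin]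
  exact hI _ (I.mem_of_dvd (mul_dvd_mul_right (dvd_pow_self m hp) x) hmx)

end FrobeniusSplit

theorem IsLocalization.AtPrime.radical_under_map_of_mem_minimalPrimes {R : Type*} [CommRing R]
    {I P : Ideal R} (hP : P ∈ I.minimalPrimes) (A : Type*) [CommRing A] [Algebra R A]
    [IsLocalization.AtPrime A P (hp := hP.isPrime)] :
    ((I.map (algebraMap R A)).under R).radical = P := by
  have := hP.isPrime
  have := IsLocalization.AtPrime.isLocalRing A P
  rw [Ideal.under, ← Ideal.comap_radical, radical_map_of_mem_minimalPrimes A P I hP,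
    map_eq_maximalIdeal P A, ← Ideal.under, under_maximalIdeal A P]

theorem minimal_primes_compatibly_split_general
    {R : Type*} [CommRing R] (p : ℕ) (hp : p.Prime)
    (σ : R → R)
    (hsemilin : ∀ a b : R, σ (a ^ p * b) = a * σ b)
    (hone : σ 1 = 1)
    (I : Ideal R) (hI : ∀ a ∈ I, σ a ∈ I) :
    ∀ P ∈ I.minimalPrimes, ∀ a ∈ P, σ a ∈ P := by
  intro P hP
  have := hP.isPrime
  let A := Localization.AtPrime P
  have hJ := IsLocalization.compatiblySplit_under_map hsemilin hp.ne_zero P.primeCompl A hI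
  rwa [← (Ideal.isRadical_of_compatiblySplit hsemilin hone hp.one_lt hJ).radical,
    IsLocalization.AtPrime.radical_under_map_of_mem_minimalPrimes hP A] at hJ

/-- Let `σ` be a Frobenius splitting of a commutative ring `R` of prime characteristic `p`,
and let `I` be an ideal of `R` compatibly split under `σ`. Then every minimal prime
of `R` over `I` is compatibly split under `σ`. -/
theorem minimal_primes_compatibly_split
    {R : Type*} [CommRing R] (p : ℕ) (hp : p.Prime) [CharP R p]
    (σ : R → R)
    (hadd : ∀ a b : R, σ (a + b) = σ a + σ b)
    (hsemilin : ∀ a b : R, σ (a ^ p * b) = a * σ b)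
    (hone : σ 1 = 1)
    (I : Ideal R) (hI : ∀ a ∈ I, σ a ∈ I) :
    ∀ P ∈ I.minimalPrimes, ∀ a ∈ P, σ a ∈ P :=
  minimal_primes_compatibly_split_general p hp σ hsemilin hone I hI
end

section
/- Let P = ∏_{i=1}^{2n-1} det L_i ∈ R. There exists an enumeration v_1, …, v_{n(n-1)} of the variables x_{ij}, y_{ij} (1 ≤ j < i ≤ n) such that every variable of V_i precedes every variable of V_j whenever i < j; and for any such enumeration, P has residual normal crossings with respect to the ordered variables v_1, …, v_{n(n-1)}. -/
/-!
Index rows and columns of `L` from `0`, and give the variable in row `r`, column `c` of `L`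
the level `n - r + c`. The entry of `L_i` in position `(a, b)` is `0`, `1`, or a variable of
level `i + b - a`, and `1` or a variable of level `i` on the diagonal. So `V_i` is the set of
variables of level `i`, and once every variable of level `< i` is set to `0`, `L_i` becomes
upper triangular and `det L_i` becomes the product of the variables of `V_i`.

An enumeration respects the `V_i` exactly when it is sorted by level, and the residual normal
crossings condition is then checked one level `t` at a time: after the variables of level `< t`
have been set to `0`, the polynomial is `∏_{v ∈ V_t} v` times the specialization of
`∏_{i > t} det L_i`, and the variables of `V_t` come off one by one.
-/

open MvPolynomial

/-- Index type for the variables `x_{rj}`, `y_{rj}` with `0 ≤ j < r < n` (0-indexed);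
`false` tags an x-variable and `true` a y-variable. -/
def Vars (n : ℕ) : Type := {v : ℕ × ℕ // v.2 < v.1 ∧ v.1 < n} × Bool

instance (n : ℕ) : DecidableEq (Vars n) := by unfold Vars; infer_instance

/-- The entry `x_{rj}` (`b = false`) or `y_{rj}` (`b = true`) (0-indexed), with the
conventions `x_{rr} = y_{rr} = 1` and `x_{rj} = y_{rj} = 0` for `r < j`. -/
noncomputable def ent (k : Type*) [Field k] (n r j : ℕ) (b : Bool) :
    MvPolynomial (Vars n) k :=
  if h : j < r ∧ r < n then X (⟨⟨(r, j), h.1, h.2⟩, b⟩ : Vars n)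
  else if r = j then 1 else 0

/-- The entry of the `n × 2n` matrix `L` in row `r` and column `c` (0-indexed): the
columns alternate `x_{r0}, y_{r0}, x_{r1}, y_{r1}, …`. -/
noncomputable def Lent (k : Type*) [Field k] (n r c : ℕ) : MvPolynomial (Vars n) k :=
  ent k n r (c / 2) (decide (c % 2 = 1))

/-- The size of the square matrix `L_i`, `1 ≤ i ≤ 2n-1`. -/
def sz (n i : ℕ) : ℕ := min i (2 * n - i)

/-- Row offset of `L_i` inside `L` (`n - i` for `i ≤ n` and `i - n` for `i ≥ n`). -/
def roff (n i : ℕ) : ℕ := (n - i) + (i - n)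

/-- Column offset of `L_i` inside `L` (`0` for `i ≤ n` and `2(i-n)` for `i ≥ n`). -/
def coff (n i : ℕ) : ℕ := 2 * (i - n)

/-- The matrix `L_i`: for `1 ≤ i ≤ n` the `i × i` submatrix of `L` on the last `i`
rows and the first `i` columns; for `n ≤ i ≤ 2n-1` the `(2n-i) × (2n-i)` submatrix
obtained from the first `i` columns of `L` by deleting the first `2(i-n)` columns
and the first `i - n` rows. -/
noncomputable def Lmat (k : Type*) [Field k] (n i : ℕ) :
    Matrix (Fin (sz n i)) (Fin (sz n i)) (MvPolynomial (Vars n) k) :=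
  Matrix.of fun r c => Lent k n (roff n i + r.1) (coff n i + c.1)

/-- The determinant `det L_i`. -/
noncomputable def detL (k : Type*) [Field k] (n i : ℕ) : MvPolynomial (Vars n) k :=
  (Lmat k n i).det

/-- The set `V_i` of variables appearing on the main diagonal of `L_i`. -/
def Vset (k : Type*) [Field k] (n i : ℕ) : Set (Vars n) :=
  {v | ∃ r : Fin (sz n i), Lmat k n i r r = X v}

/-- Residual normal crossings of a polynomial with respect to an ordered list of
variables: `f` has residual normal crossings w.r.t. the empty list if `f ≠ 0`, and
w.r.t. `z :: zs` if `z` divides `f` and the polynomial obtained from `f / z` by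
substituting `z = 0` has residual normal crossings w.r.t. `zs`. -/
def ResidualNormalCrossings {k : Type*} [Field k] {σ : Type*} [DecidableEq σ] :
    List σ → MvPolynomial σ k → Prop
  | [], f => f ≠ 0
  | z :: zs, f => ∃ g : MvPolynomial σ k, f = X z * g ∧
      ResidualNormalCrossings zs
        (aeval (fun w : σ => if w = z then (0 : MvPolynomial σ k) else X w) g)

/-- An enumeration `v` of the `n(n-1)` variables respects the order of the sets
`V_1, …, V_{2n-1}`: every variable of `V_i` precedes every variable of `V_j`
whenever `i < j`. -/
def RespectsVsets (k : Type*) [Field k] (n : ℕ) (v : Fin (n * (n - 1)) ≃ Vars n) : Prop :=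
  ∀ i j : ℕ, 1 ≤ i → j ≤ 2 * n - 1 → i < j →
    ∀ a b : Fin (n * (n - 1)), v a ∈ Vset k n i → v b ∈ Vset k n j → a < b

theorem MvPolynomial.X_ne_one {R σ : Type*} [CommSemiring R] [Nontrivial R] (s : σ) :
    (X s : MvPolynomial σ R) ≠ 1 := fun h => by
  simpa using congrArg constantCoeff h

section KillVars

variable {R σ : Type*} [CommSemiring R]

noncomputable def killVars (p : σ → Prop) [DecidablePred p] :
    MvPolynomial σ R →ₐ[R] MvPolynomial σ R :=
  aeval fun w => if p w then 0 else X w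

variable (p : σ → Prop) [DecidablePred p]

theorem killVars_X (w : σ) : killVars p (X w : MvPolynomial σ R) = if p w then 0 else X w :=
  aeval_X _ _

theorem killVars_eq_id (hp : ∀ w, ¬p w) : killVars p = AlgHom.id R (MvPolynomial σ R) :=
  algHom_ext fun w => by rw [killVars_X, if_neg (hp w), AlgHom.id_apply]

theorem killVars_killVars (q r : σ → Prop) [DecidablePred q] [DecidablePred r]
    (hr : ∀ w, r w ↔ p w ∨ q w) (f : MvPolynomial σ R) :
    killVars q (killVars p f) = killVars r f := by
  rw [← AlgHom.comp_apply]
  congr 1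
  refine algHom_ext fun w => ?_
  by_cases hpw : p w <;> by_cases hqw : q w <;>
    simp [killVars_X, hpw, hqw, hr]

theorem killVars_prod_X (s : Finset σ) (hs : ∀ w ∈ s, ¬p w) :
    killVars p (∏ w ∈ s, X w : MvPolynomial σ R) = ∏ w ∈ s, X w := by
  rw [map_prod]
  exact Finset.prod_congr rfl fun w hw => by rw [killVars_X, if_neg (hs w hw)]

end KillVars

theorem List.Pairwise.exists_eq_append {α : Type*} {d : α → ℕ} {t : ℕ} {l : List α}
    (hl : l.Pairwise (d · ≤ d ·)) (ht : ∀ w ∈ l, t ≤ d w) :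
    ∃ l₁ l₂, l = l₁ ++ l₂ ∧ (∀ w ∈ l₁, d w = t) ∧ ∀ w ∈ l₂, t < d w := by
  induction l with
  | nil => exact ⟨[], [], rfl, by simp, by simp⟩
  | cons z l ih =>
    rw [List.pairwise_cons] at hl
    by_cases hz : d z = t
    · obtain ⟨l₁, l₂, rfl, h₁, h₂⟩ :=
        ih hl.2 fun w hw => ht w (List.mem_cons_of_mem _ hw)
      exact ⟨z :: l₁, l₂, rfl, List.forall_mem_cons.2 ⟨hz, h₁⟩, h₂⟩
    · have hzt : t < d z := lt_of_le_of_ne (ht z List.mem_cons_self) (Ne.symm hz)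
      refine ⟨[], z :: l, rfl, by simp, List.forall_mem_cons.2 ⟨hzt, fun w hw => ?_⟩⟩
      exact hzt.trans_le (hl.1 w hw)

section ResidualNormalCrossings

variable {k σ : Type*} [Field k] [DecidableEq σ]

theorem residualNormalCrossings_cons_iff (z : σ) (zs : List σ) (f : MvPolynomial σ k) :
    ResidualNormalCrossings (z :: zs) f ↔
      ∃ g, f = X z * g ∧ ResidualNormalCrossings zs (killVars (· = z) g) :=
  Iff.rfl

theorem ResidualNormalCrossings.prod_X_mul_append {zs ws : List σ} (hzs : zs.Nodup)
    {g : MvPolynomial σ k} (h : ResidualNormalCrossings ws (killVars (· ∈ zs) g)) :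
    ResidualNormalCrossings (zs ++ ws) ((∏ w ∈ zs.toFinset, X w) * g) := by
  induction zs generalizing g with
  | nil =>
    rw [killVars_eq_id _ (by simp)] at h
    simpa using h
  | cons z zs ih =>
    rw [List.nodup_cons] at hzs
    rw [List.cons_append, residualNormalCrossings_cons_iff, List.toFinset_cons,
      Finset.prod_insert (by simpa using hzs.1), mul_assoc]
    refine ⟨_, rfl, ?_⟩
    rw [map_mul, killVars_prod_X _ _ (fun w hw (h : w = z) => hzs.1 (h ▸ by simpa using hw))]
    refine ih hzs.2 ?_
    rwa [killVars_killVars _ _ (· ∈ z :: zs) (fun w => by simp)]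

theorem residualNormalCrossings_killVars_prod [Fintype σ] (d : σ → ℕ)
    (f : ℕ → MvPolynomial σ k) (b : ℕ) (hd : ∀ w, d w ≤ b)
    (hf : ∀ i, killVars (d · < i) (f i) = ∏ w with d w = i, X w)
    (t : ℕ) (zs : List σ) (hsort : zs.Pairwise (d · ≤ d ·)) (hnd : zs.Nodup)
    (hmem : ∀ w, w ∈ zs ↔ t ≤ d w) :
    ResidualNormalCrossings zs (killVars (d · < t) (∏ i ∈ Finset.Icc t b, f i)) := by
  obtain ⟨m, hm⟩ : ∃ m, b + 1 - t = m := ⟨_, rfl⟩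
  induction m generalizing t zs with
  | zero =>
    have hnil : zs = [] := List.eq_nil_iff_forall_not_mem.2 fun w hw =>
      by have := (hmem w).1 hw; have := hd w; omega
    rw [hnil, Finset.Icc_eq_empty (by omega), Finset.prod_empty, map_one]
    exact one_ne_zero
  | succ m ih =>
    obtain ⟨L₁, L₂, rfl, h₁, h₂⟩ := hsort.exists_eq_append fun w hw => (hmem w).1 hw
    have hL₁ : ∀ w, w ∈ L₁ ↔ d w = t := fun w =>
      ⟨h₁ w, fun hw => (List.mem_append.1 ((hmem w).2 hw.ge)).resolve_right
        fun h => (h₂ w h).ne' hw⟩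
    have hL₂ : ∀ w, w ∈ L₂ ↔ t + 1 ≤ d w := fun w =>
      ⟨h₂ w, fun hw => (List.mem_append.1 ((hmem w).2 (by omega))).resolve_left
        fun h => by have := h₁ w h; omega⟩
    have hsplit_prod : killVars (d · < t) (∏ i ∈ Finset.Icc t b, f i) =
        (∏ w ∈ L₁.toFinset, X w) *
          killVars (d · < t) (∏ i ∈ Finset.Icc (t + 1) b, f i) := by
      rw [← Finset.insert_Icc_add_one_left_eq_Icc (by omega), Finset.prod_insert (by simp),
        map_mul, hf]
      congr 2
      ext w
      simp [hL₁]
    rw [hsplit_prod]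
    refine ResidualNormalCrossings.prod_X_mul_append hnd.of_append_left ?_
    rw [killVars_killVars _ _ (d · < t + 1) fun w => by rw [hL₁]; omega]
    exact ih (t + 1) L₂ (List.pairwise_append.1 hsort).2.1 hnd.of_append_right hL₂ (by omega)

end ResidualNormalCrossings

namespace Vars

variable {n : ℕ}

def row (v : Vars n) : ℕ := v.1.1.1

/-- The (0-indexed) column of `L` holding `v`. -/
def col (v : Vars n) : ℕ := 2 * v.1.1.2 + v.2.toNat

def level (v : Vars n) : ℕ := n - v.row + v.col

theorem row_lt (v : Vars n) : v.row < n := v.1.2.2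

theorem col_lt (v : Vars n) : v.col < 2 * v.row := by
  have := v.1.2.1
  have := Bool.toNat_le v.2
  simp only [col, row]
  omega

theorem one_le_level (v : Vars n) : 1 ≤ v.level := by
  have := v.col_lt; have := v.row_lt; simp only [level]; omega

theorem level_le (v : Vars n) : v.level ≤ 2 * n - 2 := by
  have := v.col_lt; have := v.row_lt; simp only [level]; omega

theorem exists_row_col {R m : ℕ} (hm : m / 2 < R) (hR : R < n) :
    ∃ v : Vars n, v.row = R ∧ v.col = m :=
  ⟨⟨⟨(R, m / 2), hm, hR⟩, decide (m % 2 = 1)⟩, rfl, by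
    rcases Nat.mod_two_eq_zero_or_one m with h | h <;> simp [col, h] <;> omega⟩

theorem ext_row_col {v w : Vars n} (h₁ : v.row = w.row) (h₂ : v.col = w.col) :
    v = w := by
  have hv := Bool.toNat_le v.2
  have hw := Bool.toNat_le w.2
  simp only [Vars.col] at h₂
  have hb : v.2 = w.2 := by
    cases hv' : v.2 <;> cases hw' : w.2 <;> simp_all <;> omega
  rw [hb] at h₂
  exact Prod.ext (Subtype.ext (Prod.ext h₁ (by omega))) hb

def equivSigma (n : ℕ) : Vars n ≃ (Σ r : Fin n, Fin r) × Bool where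
  toFun v := (⟨⟨v.1.1.1, v.1.2.2⟩, ⟨v.1.1.2, v.1.2.1⟩⟩, v.2)
  invFun p := (⟨(p.1.1, p.1.2), p.1.2.2, p.1.1.2⟩, p.2)

instance : Fintype (Vars n) := Fintype.ofEquiv _ (equivSigma n).symm

theorem card_eq : Fintype.card (Vars n) = n * (n - 1) := by
  rw [Fintype.card_congr (equivSigma n), Fintype.card_prod, Fintype.card_bool,
    Fintype.card_sigma]
  simp only [Fintype.card_fin]
  rw [Fin.sum_univ_eq_sum_range (fun i => i) n, Finset.sum_range_id_mul_two]

end Vars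

section Entries

variable {k : Type*} [Field k] {n i : ℕ}

theorem Lent_row_col (v : Vars n) : Lent k n v.row v.col = X v := by
  have hv := v.col_lt
  rw [Lent, ent, dif_pos ⟨by omega, v.row_lt⟩]
  congr 1
  refine Vars.ext_row_col rfl ?_
  show 2 * (v.col / 2) + (decide (v.col % 2 = 1)).toNat = v.col
  rcases Nat.mod_two_eq_zero_or_one v.col with h | h <;> simp [h] <;> omega

theorem Lent_eq_X_iff {R m : ℕ} {v : Vars n} :
    Lent k n R m = X v ↔ v.row = R ∧ v.col = m := by
  by_cases h : m / 2 < R ∧ R < n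
  · obtain ⟨w, rfl, rfl⟩ := Vars.exists_row_col h.1 h.2
    rw [Lent_row_col, (X_injective (σ := Vars n) (R := k)).eq_iff]
    exact ⟨fun h => h ▸ ⟨rfl, rfl⟩, fun h => Vars.ext_row_col h.1.symm h.2.symm⟩
  have := v.row_lt
  have := v.col_lt
  rw [Lent, ent, dif_neg h]
  split_ifs
  · exact iff_of_false (fun h => X_ne_one _ h.symm) (by omega)
  · exact iff_of_false (fun h => X_ne_zero _ h.symm) (by omega)


theorem Lmat_eq_X_iff (r c : Fin (sz n i)) {v : Vars n} :
    Lmat k n i r c = X v ↔ v.row = roff n i + r ∧ v.col = coff n i + c :=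
  Lent_eq_X_iff

theorem Lmat_diag_eq_X_iff (r : Fin (sz n i)) {v : Vars n} :
    Lmat k n i r r = X v ↔ v.level = i ∧ v.row = roff n i + r := by
  have := r.2; have := v.row_lt; have := v.col_lt
  rw [Lmat_eq_X_iff]
  simp only [Vars.level, sz, roff, coff] at *
  omega

theorem Vars.row_sub_roff_lt {v : Vars n} (hv : v.level = i) : v.row - roff n i < sz n i := by
  have := v.row_lt; have := v.col_lt
  simp only [Vars.level, sz, roff] at *
  omega

theorem Lmat_diag_row_sub_roff {v : Vars n} (hv : v.level = i) :
    Lmat k n i ⟨_, v.row_sub_roff_lt hv⟩ ⟨_, v.row_sub_roff_lt hv⟩ = X v := by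
  refine (Lmat_diag_eq_X_iff _).2 ⟨hv, ?_⟩
  show v.row = roff n i + (v.row - roff n i)
  have := v.row_lt; have := v.col_lt
  simp only [Vars.level, roff] at *
  omega

theorem mem_Vset_iff {v : Vars n} : v ∈ Vset k n i ↔ v.level = i :=
  ⟨fun ⟨r, hr⟩ => ((Lmat_diag_eq_X_iff r).1 hr).1,
    fun hv => ⟨_, Lmat_diag_row_sub_roff hv⟩⟩

theorem exists_Lmat_eq_X_level_lt {r c : Fin (sz n i)} (hcr : c < r) :
    ∃ v : Vars n, Lmat k n i r c = X v ∧ v.level < i := by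
  have := r.2
  obtain ⟨v, hv⟩ := Vars.exists_row_col (n := n) (R := roff n i + r) (m := coff n i + c)
    (by simp only [sz, roff, coff] at *; omega) (by simp only [sz, roff] at *; omega)
  refine ⟨v, (Lmat_eq_X_iff r c).2 hv, ?_⟩
  simp only [Vars.level, hv, sz, roff, coff] at *
  omega

theorem Lmat_diag_eq_one_or_X (r : Fin (sz n i)) :
    Lmat k n i r r = 1 ∨ ∃ v : Vars n, Lmat k n i r r = X v := by
  have := r.2
  by_cases h : (coff n i + r) / 2 < roff n i + r
  · obtain ⟨v, hv⟩ := Vars.exists_row_col (n := n) h (by simp only [sz, roff] at *; omega)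
    exact Or.inr ⟨v, (Lmat_eq_X_iff r r).2 hv⟩
  · left
    rw [Lmat, Matrix.of_apply, Lent, ent, dif_neg (by omega), if_pos]
    simp only [sz, roff, coff] at *
    omega

theorem prod_diag_Lmat : ∏ r, Lmat k n i r r = ∏ v with v.level = i, X v := by
  symm
  refine Finset.prod_bij_ne_one
    (fun v hv _ => ⟨_, Vars.row_sub_roff_lt (Finset.mem_filter.1 hv).2⟩)
    (fun _ _ _ => Finset.mem_univ _) (fun v hv _ w hw _ h => ?_) (fun r _ hr => ?_)
    (fun v hv _ => (Lmat_diag_row_sub_roff (Finset.mem_filter.1 hv).2).symm)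
  · have := Lmat_diag_row_sub_roff (k := k) (Finset.mem_filter.1 hv).2
    rw [h, Lmat_diag_row_sub_roff (Finset.mem_filter.1 hw).2] at this
    exact X_injective this.symm
  · obtain ⟨v, hv⟩ := (Lmat_diag_eq_one_or_X r).resolve_left hr
    obtain ⟨hlev, hrow⟩ := (Lmat_diag_eq_X_iff r).1 hv
    exact ⟨v, Finset.mem_filter.2 ⟨Finset.mem_univ _, hlev⟩, X_ne_one v,
      Fin.ext (by simp only; omega)⟩

end Entries

theorem killVars_detL (k : Type*) [Field k] (n i : ℕ) :
    killVars (Vars.level · < i) (detL k n i) = ∏ v with v.level = i, X v := by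
  rw [detL, AlgHom.map_det, Matrix.det_of_isUpperTriangular]
  · simp only [AlgHom.mapMatrix_apply, Matrix.map_apply]
    rw [← map_prod, prod_diag_Lmat, killVars_prod_X]
    simp +contextual
  · intro r c (hcr : c < r)
    obtain ⟨v, hv, hlt⟩ := exists_Lmat_eq_X_level_lt (k := k) hcr
    rw [AlgHom.mapMatrix_apply, Matrix.map_apply, hv, killVars_X, if_pos hlt]

theorem respectsVsets_iff_monotone (k : Type*) [Field k] {n : ℕ}
    (v : Fin (n * (n - 1)) ≃ Vars n) :
    RespectsVsets k n v ↔ Monotone (Vars.level ∘ v) := by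
  simp only [RespectsVsets, mem_Vset_iff]
  refine ⟨fun h a b hab => ?_, fun h i j _ _ hij a b ha hb => ?_⟩
  · by_contra hlt
    have := h _ _ (v b).one_le_level ((v a).level_le.trans (by omega)) (not_le.1 hlt) b a rfl rfl
    exact absurd hab (not_le.2 this)
  · by_contra hle
    have := h (not_lt.1 hle)
    simp only [Function.comp_apply] at this
    omega

theorem exists_equiv_monotone {σ : Type*} [Fintype σ] {N : ℕ} (hN : Fintype.card σ = N)
    (d : σ → ℕ) : ∃ v : Fin N ≃ σ, Monotone (d ∘ v) := by
  let e := (Fintype.equivFinOfCardEq hN).symm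
  exact ⟨(Tuple.sort (d ∘ e)).trans e, Tuple.monotone_sort (d ∘ e)⟩

theorem prod_detL_residual_normal_crossings_general
    (k : Type*) [Field k] (n : ℕ) :
    (∃ v : Fin (n * (n - 1)) ≃ Vars n, RespectsVsets k n v) ∧
    (∀ v : Fin (n * (n - 1)) ≃ Vars n, RespectsVsets k n v →
      ResidualNormalCrossings (List.ofFn fun a => v a)
        (∏ i ∈ Finset.Icc 1 (2 * n - 1), detL k n i)) := by
  simp only [respectsVsets_iff_monotone]
  refine ⟨exists_equiv_monotone Vars.card_eq _, fun v hv => ?_⟩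
  have h := residualNormalCrossings_killVars_prod Vars.level (detL k n) (2 * n - 1)
    (fun w => w.level_le.trans (by omega)) (killVars_detL k n) 1 (List.ofFn fun a => v a)
    (List.pairwise_ofFn.2 fun a b hab => hv hab.le) (List.nodup_ofFn.2 v.injective)
    (fun w => ⟨fun _ => w.one_le_level, fun _ => List.mem_ofFn.2 ⟨v.symm w, by simp⟩⟩)
  rwa [killVars_eq_id _ (fun w => by have := w.one_le_level; omega)] at h

/-- There exists an enumeration `v₁, …, v_{n(n-1)}` of the variables `x_{rj}, y_{rj}`
in which every variable of `V_i` precedes every variable of `V_j` whenever `i < j`,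
and for any such enumeration the product `P = ∏_{i=1}^{2n-1} det L_i` has residual
normal crossings with respect to the ordered variables `v₁, …, v_{n(n-1)}`. -/
theorem prod_detL_residual_normal_crossings
    (k : Type*) [Field k] (n : ℕ) (hn : 2 ≤ n) :
    (∃ v : Fin (n * (n - 1)) ≃ Vars n, RespectsVsets k n v) ∧
    (∀ v : Fin (n * (n - 1)) ≃ Vars n, RespectsVsets k n v →
      ResidualNormalCrossings (List.ofFn fun a => v a)
        (∏ i ∈ Finset.Icc 1 (2 * n - 1), detL k n i)) :=
  prod_detL_residual_normal_crossings_general k n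
end

section
/- Let σ be a Frobenius splitting of a commutative ring R of prime characteristic p and let I be an ideal of R that is maximally compatibly split under σ. Then the map σ[t] : R[t] → R[t] defined by σ[t](Σ_i a_i t^i) = Σ_j σ(a_{pj}) t^j maps the Rees algebra R[It] into itself, its restriction to R[It] is a Frobenius splitting of R[It], and σ[t] maps the exceptional ideal I·R[It] into itself. -/
/-!
On coefficients, `σ[t]` sends the `pj`-th coefficient to the `j`-th one, so it preserves the
Rees algebra as soon as `σ (I ^ (p j)) ⊆ I ^ j`, which follows from maximal compatibility.
The splitting identities reduce, by additivity and `(f + g) ^ p = f ^ p + g ^ p`, to monomials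
`f = a tⁿ`, where `f ^ p = a ^ p t^(np)` and they become the `p`-linearity of `σ`.
The exceptional ideal consists of the `f ∈ R[It]` whose `j`-th coefficient lies in `I ^ (j + 1)`,
i.e. with `t f ∈ R[It]`; so it is preserved because `σ (I ^ (p j + 1)) ⊆ I ^ (j + 1)`.
-/

open Polynomial

section FrobeniusExtension

variable {R : Type*} [CommRing R]

/-- `T` is the map `σ[t] : ∑ aᵢ tⁱ ↦ ∑ σ (a_{pj}) tʲ`. -/
def IsFrobeniusExtension (p : ℕ) (σ : R →+ R) (T : R[X] → R[X]) : Prop :=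
  ∀ (f : R[X]) (j : ℕ), (T f).coeff j = σ (f.coeff (p * j))

namespace IsFrobeniusExtension

variable {p : ℕ} {σ : R →+ R} {T : R[X] → R[X]}

theorem map_add (hT : IsFrobeniusExtension p σ T) (f g : R[X]) : T (f + g) = T f + T g := by
  ext j
  simp only [hT _ j, coeff_add, _root_.map_add]

theorem map_one (hT : IsFrobeniusExtension p σ T) (hp : p ≠ 0) (hone : σ 1 = 1) : T 1 = 1 := by
  ext j
  rw [hT, coeff_one, coeff_one]
  rcases eq_or_ne j 0 with rfl | hj
  · simp [hone]
  · simp [hp, hj]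

theorem map_monomial_mul (hT : IsFrobeniusExtension p σ T) (hp : 0 < p)
    (hsemilin : ∀ a b : R, σ (a ^ p * b) = a * σ b) (n : ℕ) (a : R) (g : R[X]) :
    T (monomial (n * p) (a ^ p) * g) = monomial n a * T g := by
  ext j
  simp only [hT _ j, ← C_mul_X_pow_eq_monomial, mul_assoc, coeff_C_mul, X_pow_mul,
    coeff_mul_X_pow']
  have hle : n * p ≤ p * j ↔ n ≤ j := by rw [mul_comm p j, Nat.mul_le_mul_right_iff hp]
  by_cases h : n ≤ j
  · rw [if_pos h, if_pos (hle.mpr h), hT, hsemilin, mul_comm n p, ← Nat.mul_sub]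
  · rw [if_neg h, if_neg (mt hle.mp h), mul_zero, _root_.map_zero, mul_zero]

theorem map_pow_mul [CharP R p] (hT : IsFrobeniusExtension p σ T) (hp : p.Prime)
    (hsemilin : ∀ a b : R, σ (a ^ p * b) = a * σ b) (f g : R[X]) :
    T (f ^ p * g) = f * T g := by
  have : Fact p.Prime := ⟨hp⟩
  induction f using Polynomial.induction_on' with
  | add f₁ f₂ h₁ h₂ => rw [add_pow_char, add_mul, hT.map_add, h₁, h₂, add_mul]
  | monomial n a => rw [monomial_pow, hT.map_monomial_mul hp.pos hsemilin]

end IsFrobeniusExtension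

end FrobeniusExtension

namespace reesAlgebra

variable {R : Type*} [CommRing R] {I : Ideal R}

theorem X_mul_mem_iff {f : R[X]} : X * f ∈ reesAlgebra I ↔ ∀ j, f.coeff j ∈ I ^ (j + 1) := by
  rw [mem_reesAlgebra_iff]
  refine ⟨fun h j => by simpa using h (j + 1), ?_⟩
  rintro h (_ | j)
  · simp
  · simpa using h j

variable (I) in
/-- The ideal `I · R[It]`. -/
noncomputable def exceptionalIdeal : Ideal (reesAlgebra I) :=
  Ideal.span {x : reesAlgebra I | ∃ a ∈ I, (x : R[X]) = C a}

theorem exists_mem_exceptionalIdeal_coe_eq_monomial {j : ℕ} {a : R} (ha : a ∈ I ^ (j + 1)) :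
    ∃ y ∈ exceptionalIdeal I, (y : R[X]) = monomial j a := by
  rw [pow_succ] at ha
  refine Submodule.mul_induction_on ha (fun b hb c hc => ?_) ?_
  · have hC : C c ∈ reesAlgebra I := by
      rw [← monomial_zero_left]
      exact monomial_mem.mpr (by simp)
    refine ⟨⟨monomial j b, monomial_mem.mpr hb⟩ * ⟨C c, hC⟩, ?_, ?_⟩
    · exact Ideal.mul_mem_left _ _ (Ideal.subset_span ⟨c, hc, rfl⟩)
    · rw [Subalgebra.coe_mul, monomial_mul_C]
  · rintro _ _ ⟨y₁, hy₁, h₁⟩ ⟨y₂, hy₂, h₂⟩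
    exact ⟨y₁ + y₂, add_mem hy₁ hy₂, by rw [Subalgebra.coe_add, h₁, h₂, _root_.map_add]⟩

theorem mem_exceptionalIdeal_iff {x : reesAlgebra I} :
    x ∈ exceptionalIdeal I ↔ X * (x : R[X]) ∈ reesAlgebra I := by
  constructor
  · intro hx
    induction hx using Submodule.span_induction with
    | mem y hy =>
      obtain ⟨a, ha, hy⟩ := hy
      rw [hy, X_mul_C, C_mul_X_eq_monomial]
      exact monomial_mem.mpr (by simpa using ha)
    | zero => simp
    | add y z _ _ hy hz => simpa [mul_add] using add_mem hy hz
    | smul c y _ hy => simpa [mul_left_comm] using mul_mem c.2 hy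
  · intro hx
    choose y hy hy_coe using fun j => exists_mem_exceptionalIdeal_coe_eq_monomial
      (X_mul_mem_iff.mp hx j)
    have hx_sum : x = ∑ j ∈ (x : R[X]).support, y j := by
      ext1
      rw [AddSubmonoidClass.coe_finsetSum]
      simp only [hy_coe]
      exact (x : R[X]).as_sum_support
    rw [hx_sum]
    exact Ideal.sum_mem _ fun j _ => hy j

end reesAlgebra

section CompatiblySplit

variable {R : Type*} [CommRing R] {p : ℕ} {I : Ideal R}

theorem apply_mem_pow_of_mem_pow_mul {σ : R → R} (hp : 0 < p)
    (hmax : ∀ n : ℕ, ∀ a ∈ I ^ (n * p + 1), σ a ∈ I ^ (n + 1)) {j : ℕ} {a : R}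
    (ha : a ∈ I ^ (p * j)) : σ a ∈ I ^ j := by
  cases j with
  | zero => simp
  | succ n =>
    refine hmax n a (Ideal.pow_le_pow_right ?_ ha)
    nlinarith

namespace IsFrobeniusExtension

variable {σ : R →+ R} {T : R[X] → R[X]}

theorem mem_reesAlgebra (hT : IsFrobeniusExtension p σ T) (hp : 0 < p)
    (hmax : ∀ n : ℕ, ∀ a ∈ I ^ (n * p + 1), σ a ∈ I ^ (n + 1)) {f : R[X]}
    (hf : f ∈ reesAlgebra I) : T f ∈ reesAlgebra I := by
  rw [mem_reesAlgebra_iff] at hf ⊢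
  intro j
  rw [hT]
  exact apply_mem_pow_of_mem_pow_mul hp hmax (hf _)

theorem X_mul_mem_reesAlgebra (hT : IsFrobeniusExtension p σ T)
    (hmax : ∀ n : ℕ, ∀ a ∈ I ^ (n * p + 1), σ a ∈ I ^ (n + 1)) {f : R[X]}
    (hf : X * f ∈ reesAlgebra I) : X * T f ∈ reesAlgebra I := by
  rw [reesAlgebra.X_mul_mem_iff] at hf ⊢
  intro j
  rw [hT, mul_comm p j]
  exact hmax j _ (hf _)

end IsFrobeniusExtension

end CompatiblySplit

/-- Let `σ` be a Frobenius splitting of a commutative ring `R` of prime characteristic `p`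
and let `I` be an ideal of `R` that is maximally compatibly split under `σ`
(`σ (I^(np+1)) ⊆ I^(n+1)` for all `n ≥ 0`).  Let `T = σ[t] : R[t] → R[t]` be the map
with `(T f).coeff j = σ (f.coeff (p*j))`.  Then `T` maps the Rees algebra `R[It]` into
itself, its restriction to `R[It]` is a Frobenius splitting of `R[It]`, and `T` maps the
exceptional ideal `I·R[It]` into itself. -/
theorem rees_algebra_frobenius_splitting
    {R : Type*} [CommRing R] (p : ℕ) (hp : p.Prime) [CharP R p]
    (σ : R → R)
    (hadd : ∀ a b : R, σ (a + b) = σ a + σ b)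
    (hsemilin : ∀ a b : R, σ (a ^ p * b) = a * σ b)
    (hone : σ 1 = 1)
    (I : Ideal R)
    (hmax : ∀ n : ℕ, ∀ a ∈ I ^ (n * p + 1), σ a ∈ I ^ (n + 1))
    (T : Polynomial R → Polynomial R)
    (hT : ∀ (f : Polynomial R) (j : ℕ), (T f).coeff j = σ (f.coeff (p * j))) :
    (∀ f ∈ reesAlgebra I, T f ∈ reesAlgebra I) ∧
    (∀ τ : reesAlgebra I → reesAlgebra I,
      (∀ x : reesAlgebra I, (τ x : Polynomial R) = T (x : Polynomial R)) →
      ((∀ x y : reesAlgebra I, τ (x + y) = τ x + τ y) ∧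
        (∀ x y : reesAlgebra I, τ (x ^ p * y) = x * τ y) ∧
        τ 1 = 1 ∧
        (∀ x ∈ Ideal.span {x : reesAlgebra I | ∃ a ∈ I, (x : Polynomial R) = Polynomial.C a},
          τ x ∈ Ideal.span {x : reesAlgebra I | ∃ a ∈ I, (x : Polynomial R) = Polynomial.C a}))) := by
  have hT' : IsFrobeniusExtension p (AddMonoidHom.mk' σ hadd) T := hT
  refine ⟨fun f => hT'.mem_reesAlgebra hp.pos hmax, fun τ hτ => ⟨?_, ?_, ?_, ?_⟩⟩
  · intro x y
    ext1
    rw [Subalgebra.coe_add, hτ, hτ, hτ, Subalgebra.coe_add, hT'.map_add]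
  · intro x y
    ext1
    rw [hτ, Subalgebra.coe_mul, Subalgebra.coe_mul, hτ, Subalgebra.coe_pow,
      hT'.map_pow_mul hp hsemilin]
  · ext1
    rw [hτ, Subalgebra.coe_one, hT'.map_one hp.ne_zero hone]
  · intro x hx
    refine reesAlgebra.mem_exceptionalIdeal_iff.mpr ?_
    rw [hτ]
    exact hT'.X_mul_mem_reesAlgebra hmax (reesAlgebra.mem_exceptionalIdeal_iff.mp hx)
end

section
/- Let σ be a Frobenius splitting of a commutative ring R of prime characteristic p, let I be an ideal of R maximally compatibly split under σ, and let J be an ideal of R compatibly split under σ (i.e. σ(J) ⊆ J). Then σ induces a Frobenius splitting σ̄ of R/J given by σ̄(a + J) = σ(a) + J, and the ideal (I + J)/J of R/J is maximally compatibly split under σ̄. -/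
/-- Let `σ` be a Frobenius splitting of a commutative ring `R` of prime characteristic `p`,
let `I` be an ideal maximally compatibly split under `σ`, and `J` an ideal compatibly
split under `σ`.  Then `σ` induces a Frobenius splitting `σ'` of `R/J` with
`σ' (a + J) = σ a + J`, and the ideal `(I + J)/J` of `R/J` is maximally compatibly
split under `σ'`. -/
theorem quotient_frobenius_splitting_maximal
    {R : Type*} [CommRing R] (p : ℕ) (hp : p.Prime) [CharP R p]
    (σ : R → R)
    (hadd : ∀ a b : R, σ (a + b) = σ a + σ b)
    (hsemilin : ∀ a b : R, σ (a ^ p * b) = a * σ b)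
    (hone : σ 1 = 1)
    (I J : Ideal R)
    (hmax : ∀ n : ℕ, ∀ a ∈ I ^ (n * p + 1), σ a ∈ I ^ (n + 1))
    (hJ : ∀ a ∈ J, σ a ∈ J) :
    ∃ σ' : R ⧸ J → R ⧸ J,
      (∀ a : R, σ' (Ideal.Quotient.mk J a) = Ideal.Quotient.mk J (σ a)) ∧
      (∀ x y : R ⧸ J, σ' (x + y) = σ' x + σ' y) ∧
      (∀ x y : R ⧸ J, σ' (x ^ p * y) = x * σ' y) ∧
      σ' 1 = 1 ∧
      (∀ n : ℕ, ∀ x ∈ (I.map (Ideal.Quotient.mk J)) ^ (n * p + 1),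
        σ' x ∈ (I.map (Ideal.Quotient.mk J)) ^ (n + 1)) := by
  have hzero : σ 0 = 0 := by
    have h := hadd 0 0
    simp only [add_zero] at h
    exact (add_eq_left.mp h.symm)
  have hneg : ∀ a : R, σ (-a) = - σ a := by
    intro a
    have h := hadd a (-a)
    simp only [add_neg_cancel, hzero] at h
    exact (neg_eq_of_add_eq_zero_right h.symm).symm
  refine ⟨fun x => Quotient.liftOn' x (fun a => Ideal.Quotient.mk J (σ a)) ?_, ?_, ?_, ?_, ?_, ?_⟩
  · intro a b h
    have hab : a - b ∈ J := by
      rwa [Submodule.quotientRel_def] at h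
    apply Ideal.Quotient.eq.mpr
    have : σ (a - b) ∈ J := hJ _ hab
    rwa [sub_eq_add_neg, hadd, hneg, ← sub_eq_add_neg] at this
  · intro a; rfl
  · intro x y
    obtain ⟨a, rfl⟩ := Ideal.Quotient.mk_surjective x
    obtain ⟨b, rfl⟩ := Ideal.Quotient.mk_surjective y
    show Ideal.Quotient.mk J (σ (a + b)) = Ideal.Quotient.mk J (σ a) + Ideal.Quotient.mk J (σ b)
    rw [hadd, map_add]
  · intro x y
    obtain ⟨a, rfl⟩ := Ideal.Quotient.mk_surjective x
    obtain ⟨b, rfl⟩ := Ideal.Quotient.mk_surjective y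
    show Ideal.Quotient.mk J (σ (a ^ p * b)) = Ideal.Quotient.mk J a * Ideal.Quotient.mk J (σ b)
    rw [hsemilin, map_mul]
  · show Ideal.Quotient.mk J (σ 1) = 1
    rw [hone, map_one]
  · intro n x hx
    rw [← Ideal.map_pow] at hx
    obtain ⟨a, ha, rfl⟩ := Ideal.mem_map_iff_of_surjective _ Ideal.Quotient.mk_surjective |>.mp hx
    show Ideal.Quotient.mk J (σ a) ∈ _
    rw [← Ideal.map_pow]
    exact Ideal.mem_map_of_mem _ (hmax n a ha)
end

section
/- Let S = ⊕_{n≥0} S_n be an ℕ-graded commutative ring of prime characteristic p and let σ be a Frobenius splitting of S. Define σ₀ : S → S additively by setting, for x homogeneous of degree m, σ₀(x) equal to the homogeneous component of degree m/p of σ(x) if p divides m, and σ₀(x) = 0 if p does not divide m. Then σ₀ is a Frobenius splitting of S satisfying σ₀(S_{np}) ⊆ S_n for all n and σ₀(S_m) = 0 when p ∤ m; and for every homogeneous ideal I of S with σ(I) ⊆ I one has σ₀(I) ⊆ I. -/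
/-!
`σ₀` is built additively from its values on the graded pieces. For homogeneous `a` of degree `k`, `a ^ p` has degree
`p * k`, so taking the degree-`(k + j)` component of `σ (a ^ p * x) = a * σ x` is the same as
multiplying the degree-`j` component of `σ x` by `a`; this gives `σ₀ (a ^ p * b) = a * σ₀ b`
for homogeneous `a`, and the freshman's dream `(a + a') ^ p = a ^ p + a' ^ p` extends it to
all `a`. Compatibility with homogeneous ideals holds because such an ideal contains the
homogeneous components of its elements.
-/

open DirectSum

namespace GradedRing

variable {S : Type*} [CommRing S] (𝒜 : ℕ → AddSubgroup S) [GradedRing 𝒜]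

noncomputable def frobeniusGradedPart (p : ℕ) (σ : S →+ S) : S →+ S :=
  (toAddMonoid fun m =>
      if p ∣ m then ((proj 𝒜 (m / p)).comp σ).comp (𝒜 m).subtype else 0).comp
    (decomposeAddEquiv 𝒜).toAddMonoidHom

variable {𝒜} {p : ℕ} {σ : S →+ S}

theorem frobeniusGradedPart_apply_of_mem {m : ℕ} {x : S} (hx : x ∈ 𝒜 m) :
    frobeniusGradedPart 𝒜 p σ x = if p ∣ m then proj 𝒜 (m / p) (σ x) else 0 := by
  classical
  simp only [frobeniusGradedPart, AddMonoidHom.coe_comp, Function.comp_apply,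
    AddEquiv.coe_toAddMonoidHom, decomposeAddEquiv_apply, decompose_of_mem 𝒜 hx,
    toAddMonoid_of]
  split_ifs <;> rfl

theorem frobeniusGradedPart_of_not_dvd {m : ℕ} {x : S} (hx : x ∈ 𝒜 m) (hm : ¬p ∣ m) :
    frobeniusGradedPart 𝒜 p σ x = 0 := by
  rw [frobeniusGradedPart_apply_of_mem hx, if_neg hm]

theorem frobeniusGradedPart_mem (hp : 0 < p) {n : ℕ} {x : S} (hx : x ∈ 𝒜 (n * p)) :
    frobeniusGradedPart 𝒜 p σ x ∈ 𝒜 n := by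
  rw [frobeniusGradedPart_apply_of_mem hx, if_pos (dvd_mul_left p n),
    Nat.mul_div_cancel _ hp, proj_apply]
  exact SetLike.coe_mem _

theorem frobeniusGradedPart_one (hone : σ 1 = 1) : frobeniusGradedPart 𝒜 p σ 1 = 1 := by
  rw [frobeniusGradedPart_apply_of_mem (SetLike.one_mem_graded 𝒜), if_pos (dvd_zero p),
    Nat.zero_div, hone, proj_apply, decompose_of_mem_same 𝒜 (SetLike.one_mem_graded 𝒜)]

theorem frobeniusGradedPart_pow_mul_of_mem (hp : 0 < p)
    (hσ : ∀ a b : S, σ (a ^ p * b) = a * σ b) {k : ℕ} {a : S} (ha : a ∈ 𝒜 k) (b : S) :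
    frobeniusGradedPart 𝒜 p σ (a ^ p * b) = a * frobeniusGradedPart 𝒜 p σ b := by
  induction b using DirectSum.Decomposition.inductionOn 𝒜 with
  | zero => simp
  | @homogeneous m x =>
    have hap : a ^ p ∈ 𝒜 (p * k) := by
      simpa only [smul_eq_mul] using SetLike.pow_mem_graded p ha
    rw [frobeniusGradedPart_apply_of_mem (SetLike.mul_mem_graded hap x.2),
      frobeniusGradedPart_apply_of_mem x.2, hσ]
    by_cases hm : p ∣ m
    · obtain ⟨c, rfl⟩ := hm
      rw [← Nat.mul_add, if_pos (dvd_mul_right p _), if_pos (dvd_mul_right p c),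
        Nat.mul_div_cancel_left _ hp, Nat.mul_div_cancel_left _ hp, proj_apply, proj_apply,
        coe_decompose_mul_add_of_left_mem 𝒜 ha]
    · rw [if_neg fun h => hm ((Nat.dvd_add_right (dvd_mul_right p k)).mp h), if_neg hm,
        mul_zero]
  | add x y hx hy => rw [mul_add, map_add, hx, hy, map_add, mul_add]

theorem frobeniusGradedPart_pow_mul [Fact p.Prime] [CharP S p]
    (hσ : ∀ a b : S, σ (a ^ p * b) = a * σ b) (a b : S) :
    frobeniusGradedPart 𝒜 p σ (a ^ p * b) = a * frobeniusGradedPart 𝒜 p σ b := by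
  have hp := (Fact.out : p.Prime)
  induction a using DirectSum.Decomposition.inductionOn 𝒜 with
  | zero => rw [zero_pow hp.ne_zero, zero_mul, map_zero, zero_mul]
  | @homogeneous k x => exact frobeniusGradedPart_pow_mul_of_mem hp.pos hσ x.2 b
  | add x y hx hy => rw [add_pow_char, add_mul, map_add, hx, hy, add_mul]

theorem frobeniusGradedPart_mem_ideal {I : Ideal S} (hI : I.IsHomogeneous 𝒜)
    (hσI : ∀ a ∈ I, σ a ∈ I) {a : S} (ha : a ∈ I) : frobeniusGradedPart 𝒜 p σ a ∈ I := by
  classical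
  rw [← sum_support_decompose 𝒜 a, map_sum]
  refine Ideal.sum_mem _ fun m _ => ?_
  rw [frobeniusGradedPart_apply_of_mem (SetLike.coe_mem _)]
  split_ifs
  · rw [proj_apply]
    exact hI _ (hσI _ (hI m ha))
  · exact I.zero_mem

end GradedRing

open GradedRing in
/-- Let `S = ⊕ₙ Sₙ` be an ℕ-graded commutative ring of prime characteristic `p` and `σ`
a Frobenius splitting of `S`.  Define `σ₀` additively, on a homogeneous element `x` of
degree `m`, as the degree-`m/p` homogeneous component of `σ x` if `p ∣ m`, and `0`
otherwise.  Then `σ₀` is a Frobenius splitting of `S` with `σ₀ (S_{np}) ⊆ S_n` and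
`σ₀ (S_m) = 0` for `p ∤ m`, and `σ₀` compatibly splits every homogeneous ideal that
is compatibly split by `σ`. -/
theorem graded_frobenius_splitting
    {S : Type*} [CommRing S] (p : ℕ) (hp : p.Prime) [CharP S p]
    (𝒜 : ℕ → AddSubgroup S) [GradedRing 𝒜]
    (σ : S → S)
    (hadd : ∀ a b : S, σ (a + b) = σ a + σ b)
    (hsemilin : ∀ a b : S, σ (a ^ p * b) = a * σ b)
    (hone : σ 1 = 1) :
    ∃ σ₀ : S → S,
      (∀ a b : S, σ₀ (a + b) = σ₀ a + σ₀ b) ∧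
      (∀ (m : ℕ) (x : S), x ∈ 𝒜 m →
        σ₀ x = if p ∣ m then GradedRing.proj 𝒜 (m / p) (σ x) else 0) ∧
      (∀ a b : S, σ₀ (a ^ p * b) = a * σ₀ b) ∧
      σ₀ 1 = 1 ∧
      (∀ (n : ℕ) (x : S), x ∈ 𝒜 (n * p) → σ₀ x ∈ 𝒜 n) ∧
      (∀ (m : ℕ) (x : S), x ∈ 𝒜 m → ¬ p ∣ m → σ₀ x = 0) ∧
      (∀ I : Ideal S,
        (∃ G : Set S, (∀ g ∈ G, ∃ m : ℕ, g ∈ 𝒜 m) ∧ I = Ideal.span G) →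
        (∀ a ∈ I, σ a ∈ I) → ∀ a ∈ I, σ₀ a ∈ I) := by
  have : Fact p.Prime := ⟨hp⟩
  let σ₀ := frobeniusGradedPart 𝒜 p (AddMonoidHom.mk' σ hadd)
  refine ⟨σ₀, map_add σ₀, fun m x hx => frobeniusGradedPart_apply_of_mem hx,
    frobeniusGradedPart_pow_mul hsemilin, frobeniusGradedPart_one hone,
    fun n x hx => frobeniusGradedPart_mem hp.pos hx,
    fun m x hx hm => frobeniusGradedPart_of_not_dvd hx hm, ?_⟩
  rintro I ⟨G, hG, rfl⟩ hσI a ha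
  exact frobeniusGradedPart_mem_ideal (Ideal.homogeneous_span 𝒜 G hG) hσI ha
end

section
/- Let k be a field of characteristic p > 0, R = k[x_1,…,x_n], 1 ≤ d ≤ n, and I = (x_1,…,x_d). Let s ∈ R be such that every multi-exponent α in the support of s satisfies α_1 + ⋯ + α_d ≥ d(p-1). Then for every integer m ≥ 0 and every w ∈ I^{mp+1}, one has Tr(s·w) ∈ I^{m+1}. -/
/-!
For `S` a set of variables, `(X i : i ∈ S)^N` consists of the polynomials all of whose monomials
have degree at least `N` in the variables of `S`. If `x^γ` has `S`-degree `≥ d(p-1) + mp + 1` and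
`γ = pδ + (p-1)·𝟙`, then the `S`-degree of `γ` is `p·deg_S δ + (p-1)·#S` with `#S ≤ d`, so
`p·deg_S δ > mp`, i.e. `Tr` sends `x^γ` to a monomial of `S`-degree `≥ m + 1`.
-/

open MvPolynomial
open scoped Classical

/-- The trace map `Tr : k[x₁,…,xₙ] → k[x₁,…,xₙ]` sending the monomial `x^γ` to `x^δ`
if `γ = p·δ + (p-1)·(1,…,1)` for some `δ ∈ ℕⁿ`, and to `0` otherwise (extended
`k`-linearly). -/
noncomputable def Tr {k : Type*} [CommRing k] {n : ℕ} (p : ℕ)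
    (f : MvPolynomial (Fin n) k) : MvPolynomial (Fin n) k :=
  ∑ γ ∈ f.support,
    if h : ∃ δ : Fin n →₀ ℕ,
        γ = p • δ + Finsupp.equivFunOnFinite.symm (fun _ : Fin n => p - 1) then
      MvPolynomial.monomial h.choose (MvPolynomial.coeff γ f)
    else 0

namespace Finsupp

variable {σ : Type*}

noncomputable def degreeOn (S : Finset σ) : (σ →₀ ℕ) →+ ℕ :=
  ∑ i ∈ S, applyAddHom i

@[simp]
lemma degreeOn_apply (S : Finset σ) (γ : σ →₀ ℕ) : degreeOn S γ = ∑ i ∈ S, γ i := by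
  simp [degreeOn]

lemma degreeOn_mono (S : Finset σ) : Monotone (degreeOn S) := fun _ _ h => by
  simpa using Finset.sum_le_sum fun i _ => h i

lemma degreeOn_single_of_mem {S : Finset σ} {i : σ} (hi : i ∈ S) :
    degreeOn S (single i 1) = 1 := by
  simp [single_apply, hi]

end Finsupp

namespace MvPolynomial

open Finsupp

variable {σ R : Type*} [CommSemiring R] (S : Finset σ)

noncomputable def degreeOnIdeal (N : ℕ) : Ideal (MvPolynomial σ R) :=
  restrictSupportIdeal R (degreeOn S ⁻¹' Set.Ici N) ((isUpperSet_Ici N).preimage (degreeOn_mono S))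

lemma mul_mem_degreeOnIdeal {a b : ℕ} {f g : MvPolynomial σ R}
    (hf : f ∈ degreeOnIdeal S a) (hg : g ∈ degreeOnIdeal S b) :
    f * g ∈ degreeOnIdeal S (a + b) := fun γ hγ => by
  obtain ⟨α, hα, β, hβ, rfl⟩ := Finset.mem_add.1 (support_mul f g hγ)
  rw [Set.mem_preimage, map_add]
  exact add_le_add (show a ≤ degreeOn S α from hf hα) (show b ≤ degreeOn S β from hg hβ)

lemma pow_span_X_image_le_degreeOnIdeal (N : ℕ) :
    Ideal.span (X '' (S : Set σ)) ^ N ≤ degreeOnIdeal (R := R) S N := by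
  induction N with
  | zero => exact fun _ _ _ _ => Nat.zero_le _
  | succ N ih =>
    have hspan : Ideal.span (X '' (S : Set σ)) ≤ degreeOnIdeal (R := R) S 1 := fun g hg γ hγ => by
      obtain ⟨i, hi, hγi⟩ := mem_ideal_span_X_image.1 hg γ hγ
      rw [Set.mem_preimage, degreeOn_apply]
      exact (Nat.one_le_iff_ne_zero.2 hγi).trans
        (Finset.single_le_sum (fun j _ => Nat.zero_le (γ j)) hi)
    rw [pow_succ]
    exact Ideal.mul_le.2 fun f hf g hg => mul_mem_degreeOnIdeal S (ih hf) (hspan hg)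

lemma monomial_mem_pow_span_X_image {N : ℕ} {γ : σ →₀ ℕ} (hγ : N ≤ degreeOn S γ) (c : R) :
    monomial γ c ∈ Ideal.span (X '' (S : Set σ)) ^ N := by
  induction N generalizing γ with
  | zero => simp
  | succ N ih =>
    obtain ⟨i, hiS, hi⟩ : ∃ i ∈ S, γ i ≠ 0 :=
      Finset.exists_ne_zero_of_sum_ne_zero (by rw [← degreeOn_apply]; omega)
    obtain ⟨γ', rfl⟩ : ∃ γ', γ = single i 1 + γ' :=
      le_iff_exists_add.1 (single_le_iff.2 (Nat.one_le_iff_ne_zero.2 hi))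
    rw [monomial_single_add, pow_one, pow_succ']
    refine Ideal.mul_mem_mul (Ideal.subset_span ⟨i, hiS, rfl⟩) (ih ?_)
    rw [map_add, degreeOn_single_of_mem hiS] at hγ
    omega

theorem mem_pow_span_X_image_iff {N : ℕ} {f : MvPolynomial σ R} :
    f ∈ Ideal.span (X '' (S : Set σ)) ^ N ↔ ∀ γ ∈ f.support, N ≤ degreeOn S γ := by
  refine ⟨fun hf => pow_span_X_image_le_degreeOnIdeal S N hf, fun hf => ?_⟩
  rw [f.as_sum]
  exact Ideal.sum_mem _ fun γ hγ => monomial_mem_pow_span_X_image S (hf γ hγ) _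

end MvPolynomial

section Trace

open Finsupp

lemma degreeOn_trace_exponent {n : ℕ} (S : Finset (Fin n)) (p : ℕ) (δ : Fin n →₀ ℕ) :
    degreeOn S (p • δ + equivFunOnFinite.symm (fun _ : Fin n => p - 1)) =
      p * degreeOn S δ + S.card * (p - 1) := by
  simp [Finset.sum_add_distrib, Finset.mul_sum]

theorem Tr_mem_pow_span_X_image {k : Type*} [CommRing k] {n : ℕ} (p m : ℕ)
    (S : Finset (Fin n)) {f : MvPolynomial (Fin n) k}
    (hf : f ∈ Ideal.span (X '' (S : Set (Fin n))) ^ (S.card * (p - 1) + (m * p + 1))) :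
    Tr p f ∈ Ideal.span (X '' (S : Set (Fin n))) ^ (m + 1) := by
  refine Ideal.sum_mem _ fun γ hγ => ?_
  split
  · next h =>
    refine monomial_mem_pow_span_X_image S ?_ _
    have hγdeg := (mem_pow_span_X_image_iff S).1 hf γ hγ
    rw [h.choose_spec, degreeOn_trace_exponent] at hγdeg
    have : p * m < p * degreeOn S h.choose := by rw [mul_comm p m]; omega
    exact Nat.lt_of_mul_lt_mul_left this
  · exact Ideal.zero_mem _

end Trace

theorem maximal_vanishing_implies_maximally_compatibly_split_general
    {k : Type*} [Field k] (p : ℕ)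
    {n : ℕ} (d : ℕ)
    (s : MvPolynomial (Fin n) k)
    (hs : ∀ α ∈ s.support,
      d * (p - 1) ≤ ∑ i ∈ Finset.univ.filter (fun i : Fin n => (i : ℕ) < d), α i) :
    ∀ m : ℕ, ∀ w ∈ (Ideal.span ((fun i : Fin n => (X i : MvPolynomial (Fin n) k)) ''
          {i : Fin n | (i : ℕ) < d})) ^ (m * p + 1),
      Tr p (s * w) ∈ (Ideal.span ((fun i : Fin n => (X i : MvPolynomial (Fin n) k)) ''
          {i : Fin n | (i : ℕ) < d})) ^ (m + 1) := by
  intro m w hw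
  set S := Finset.univ.filter (fun i : Fin n => (i : ℕ) < d)
  have hS : (fun i : Fin n => (X i : MvPolynomial (Fin n) k)) '' {i | (i : ℕ) < d} =
      X '' (S : Set (Fin n)) := by
    simp [S]
  rw [hS] at hw ⊢
  have hs' : s ∈ Ideal.span (X '' (S : Set (Fin n))) ^ (d * (p - 1)) :=
    (mem_pow_span_X_image_iff S).2 (by simpa using hs)
  have hcard : S.card ≤ d := Fin.card_filter_val_lt.trans_le (min_le_right n d)
  have hsw := Ideal.mul_mem_mul hs' hw
  rw [← pow_add] at hsw
  exact Tr_mem_pow_span_X_image p m S (Ideal.pow_le_pow_right (by gcongr) hsw)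

/-- Let `k` be a field of characteristic `p > 0`, `R = k[x₁,…,xₙ]`, `1 ≤ d ≤ n`, and
`I = (x₁,…,x_d)`.  If every multi-exponent `α` in the support of `s` satisfies
`α₁ + ⋯ + α_d ≥ d(p-1)`, then for every `m ≥ 0` and every `w ∈ I^{mp+1}` one has
`Tr (s * w) ∈ I^{m+1}`. -/
theorem maximal_vanishing_implies_maximally_compatibly_split
    {k : Type*} [Field k] (p : ℕ) (hp : p.Prime) [CharP k p]
    {n : ℕ} (d : ℕ) (hd1 : 1 ≤ d) (hdn : d ≤ n)
    (s : MvPolynomial (Fin n) k)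
    (hs : ∀ α ∈ s.support,
      d * (p - 1) ≤ ∑ i ∈ Finset.univ.filter (fun i : Fin n => (i : ℕ) < d), α i) :
    ∀ m : ℕ, ∀ w ∈ (Ideal.span ((fun i : Fin n => (X i : MvPolynomial (Fin n) k)) ''
          {i : Fin n | (i : ℕ) < d})) ^ (m * p + 1),
      Tr p (s * w) ∈ (Ideal.span ((fun i : Fin n => (X i : MvPolynomial (Fin n) k)) ''
          {i : Fin n | (i : ℕ) < d})) ^ (m + 1) :=
  maximal_vanishing_implies_maximally_compatibly_split_general p d s hs
end

section
/- Let k be a field of characteristic p > 0, R = k[x_1,…,x_n], 1 ≤ d ≤ n, and I = (x_1,…,x_d). Let s ∈ R be such that Tr(s·w) ∈ I^{m+1} for every integer m ≥ 0 and every w ∈ I^{mp+1}. Then every multi-exponent α in the support of s satisfies α_1 + ⋯ + α_d ≥ d(p-1). -/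
open MvPolynomial
open scoped Classical

lemma coeff_Tr {k : Type*} [CommRing k] {n : ℕ} {p : ℕ} (hp : 0 < p)
    (f : MvPolynomial (Fin n) k) (δ : Fin n →₀ ℕ) :
    MvPolynomial.coeff δ (Tr p f) =
      MvPolynomial.coeff
        (p • δ + Finsupp.equivFunOnFinite.symm (fun _ : Fin n => p - 1)) f := by
  set c1 : Fin n →₀ ℕ := Finsupp.equivFunOnFinite.symm (fun _ : Fin n => p - 1) with hc1
  unfold Tr
  rw [MvPolynomial.coeff_sum]
  have hstep : ∀ γ ∈ f.support,
      MvPolynomial.coeff δ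
        (if h : ∃ δ' : Fin n →₀ ℕ, γ = p • δ' + c1 then
          MvPolynomial.monomial h.choose (MvPolynomial.coeff γ f) else 0)
      = if γ = p • δ + c1 then MvPolynomial.coeff γ f else 0 := by
    intro γ _
    by_cases h : ∃ δ' : Fin n →₀ ℕ, γ = p • δ' + c1
    · rw [dif_pos h, MvPolynomial.coeff_monomial]
      have hspec := h.choose_spec
      congr 1
      simp only [eq_iff_iff]
      constructor
      · intro he; rw [hspec, he]
      · intro he
        have : p • h.choose = p • δ := by
          have := hspec.symm.trans he
          exact add_right_cancel this
        ext i
        have := congrArg (fun g : Fin n →₀ ℕ => g i) this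
        simp only [Finsupp.smul_apply, smul_eq_mul] at this
        exact Nat.eq_of_mul_eq_mul_left hp this
    · rw [dif_neg h, if_neg, MvPolynomial.coeff_zero]
      intro he; exact h ⟨δ, he⟩
  rw [Finset.sum_congr rfl hstep, Finset.sum_ite_eq' f.support (p • δ + c1)
    (fun γ => MvPolynomial.coeff γ f)]
  by_cases hmem : p • δ + c1 ∈ f.support
  · rw [if_pos hmem]
  · rw [if_neg hmem]
    exact (MvPolynomial.notMem_support_iff.mp hmem).symm

/-- Every monomial exponent of an element of `I^N` (where `I = (x₁,…,x_d)`) has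
weight at least `N` on the first `d` coordinates. -/
lemma wt_ge_of_mem_pow {k : Type*} [CommRing k] {n : ℕ} (d : ℕ) (N : ℕ) :
    ∀ f : MvPolynomial (Fin n) k,
      f ∈ (Ideal.span ((fun i : Fin n => (X i : MvPolynomial (Fin n) k)) ''
          {i : Fin n | (i : ℕ) < d})) ^ N →
      ∀ γ ∈ f.support,
        N ≤ ∑ i ∈ Finset.univ.filter (fun i : Fin n => (i : ℕ) < d), γ i := by
  induction N with
  | zero => intro f _ γ _; exact Nat.zero_le _
  | succ N ih =>
    intro f hf
    rw [pow_succ] at hf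
    refine Submodule.mul_induction_on hf ?_ ?_
    · intro a ha b hb γ hγ
      have hmem := MvPolynomial.support_mul a b hγ
      rw [Finset.mem_add] at hmem
      obtain ⟨γ1, hγ1, γ2, hγ2, rfl⟩ := hmem
      have h1 : N ≤ ∑ i ∈ Finset.univ.filter (fun i : Fin n => (i : ℕ) < d), γ1 i :=
        ih a ha γ1 hγ1
      have h2 : 1 ≤ ∑ i ∈ Finset.univ.filter (fun i : Fin n => (i : ℕ) < d), γ2 i := by
        have hb' : b ∈ Ideal.span (MvPolynomial.X ''
            {i : Fin n | (i : ℕ) < d} : Set (MvPolynomial (Fin n) k)) := hb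
        obtain ⟨i, hi, hne⟩ := MvPolynomial.mem_ideal_span_X_image.mp hb' γ2 hγ2
        calc 1 ≤ γ2 i := Nat.one_le_iff_ne_zero.mpr hne
          _ ≤ _ := Finset.single_le_sum (fun j _ => Nat.zero_le _)
            (Finset.mem_filter.mpr ⟨Finset.mem_univ i, hi⟩)
      calc N + 1 ≤ (∑ i ∈ Finset.univ.filter (fun i : Fin n => (i : ℕ) < d), γ1 i) +
            ∑ i ∈ Finset.univ.filter (fun i : Fin n => (i : ℕ) < d), γ2 i :=
          Nat.add_le_add h1 h2
        _ = _ := (Finset.sum_add_distrib).symm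
    · intro a b ha hb γ hγ
      have := MvPolynomial.support_add hγ
      rcases Finset.mem_union.mp this with h | h
      · exact ha γ h
      · exact hb γ h

/-- A monomial with weight at least `N` on the first `d` coordinates lies in `I^N`. -/
lemma monomial_mem_pow {k : Type*} [CommRing k] {n : ℕ} (d : ℕ) (N : ℕ) :
    ∀ β : Fin n →₀ ℕ,
      N ≤ ∑ i ∈ Finset.univ.filter (fun i : Fin n => (i : ℕ) < d), β i →
      MvPolynomial.monomial β (1 : k) ∈
        (Ideal.span ((fun i : Fin n => (X i : MvPolynomial (Fin n) k)) ''
          {i : Fin n | (i : ℕ) < d})) ^ N := by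
  induction N with
  | zero => intro β _; simp
  | succ N ih =>
    intro β hβ
    have hex : ∃ i ∈ Finset.univ.filter (fun i : Fin n => (i : ℕ) < d), β i ≠ 0 := by
      by_contra h
      push_neg at h
      have : ∑ i ∈ Finset.univ.filter (fun i : Fin n => (i : ℕ) < d), β i = 0 :=
        Finset.sum_eq_zero h
      omega
    obtain ⟨i, hiF, hβi⟩ := hex
    have hle : Finsupp.single i 1 ≤ β :=
      Finsupp.single_le_iff.mpr (Nat.one_le_iff_ne_zero.mpr hβi)
    have hsum_single : ∑ j ∈ Finset.univ.filter (fun j : Fin n => (j : ℕ) < d),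
        (Finsupp.single i 1 : Fin n →₀ ℕ) j = 1 := by
      rw [Finset.sum_congr rfl (fun j _ => Finsupp.single_apply),
        Finset.sum_ite_eq _ i (fun _ => 1), if_pos hiF]
    have hsub : N ≤ ∑ j ∈ Finset.univ.filter (fun j : Fin n => (j : ℕ) < d),
        ((β - Finsupp.single i 1 : Fin n →₀ ℕ)) j := by
      have h1 : ∀ j ∈ Finset.univ.filter (fun j : Fin n => (j : ℕ) < d),
          ((β - Finsupp.single i 1 : Fin n →₀ ℕ)) j
            = β j - (Finsupp.single i 1 : Fin n →₀ ℕ) j :=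
        fun j _ => Finsupp.tsub_apply β (Finsupp.single i 1) j
      rw [Finset.sum_congr rfl h1,
        Finset.sum_tsub_distrib _ (fun j _ => hle j), hsum_single]
      omega
    have heq : (MvPolynomial.monomial β (1 : k)) =
        (MvPolynomial.monomial (β - Finsupp.single i 1) (1 : k)) * X i := by
      rw [MvPolynomial.X, MvPolynomial.monomial_mul, mul_one]
      congr 1
      rw [tsub_add_cancel_of_le hle]
    rw [heq, pow_succ]
    refine Ideal.mul_mem_mul (ih _ hsub) (Ideal.subset_span ?_)
    exact ⟨i, (Finset.mem_filter.mp hiF).2, rfl⟩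

/-- Let `k` be a field of characteristic `p > 0`, `R = k[x₁,…,xₙ]`, `1 ≤ d ≤ n`, and
`I = (x₁,…,x_d)`.  If `Tr (s * w) ∈ I^{m+1}` for every `m ≥ 0` and every `w ∈ I^{mp+1}`,
then every multi-exponent `α` in the support of `s` satisfies
`α₁ + ⋯ + α_d ≥ d(p-1)`. -/
theorem maximally_compatibly_split_implies_maximal_vanishing
    {k : Type*} [Field k] (p : ℕ) (hp : p.Prime) [CharP k p]
    {n : ℕ} (d : ℕ) (hd1 : 1 ≤ d) (hdn : d ≤ n)
    (s : MvPolynomial (Fin n) k)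
    (hs : ∀ m : ℕ, ∀ w ∈ (Ideal.span ((fun i : Fin n => (X i : MvPolynomial (Fin n) k)) ''
          {i : Fin n | (i : ℕ) < d})) ^ (m * p + 1),
      Tr p (s * w) ∈ (Ideal.span ((fun i : Fin n => (X i : MvPolynomial (Fin n) k)) ''
          {i : Fin n | (i : ℕ) < d})) ^ (m + 1)) :
    ∀ α ∈ s.support,
      d * (p - 1) ≤ ∑ i ∈ Finset.univ.filter (fun i : Fin n => (i : ℕ) < d), α i := by
  intro α hα
  by_contra hlt
  push_neg at hlt
  have hppos : 0 < p := hp.pos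
  set F : Finset (Fin n) := Finset.univ.filter (fun i : Fin n => (i : ℕ) < d) with hF
  -- card of F is d
  have hcard : F.card = d := by
    have : F = Finset.map ⟨Fin.castLE hdn, Fin.castLE_injective hdn⟩ Finset.univ := by
      ext i
      simp only [hF, Finset.mem_filter, Finset.mem_univ, true_and, Finset.mem_map,
        Function.Embedding.coeFn_mk]
      constructor
      · intro h; exact ⟨⟨(i : ℕ), h⟩, Fin.ext rfl⟩
      · rintro ⟨j, rfl⟩; exact j.isLt
    rw [this, Finset.card_map, Finset.card_univ, Fintype.card_fin]
  set β : Fin n →₀ ℕ := Finsupp.equivFunOnFinite.symm (fun i => (p - 1) - α i % p) with hβ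
  set δ0 : Fin n →₀ ℕ := Finsupp.equivFunOnFinite.symm (fun i => α i / p) with hδ0
  set c1 : Fin n →₀ ℕ := Finsupp.equivFunOnFinite.symm (fun _ : Fin n => p - 1) with hc1
  have hβa : ∀ i, β i = (p - 1) - α i % p := fun i => rfl
  have hδa : ∀ i, δ0 i = α i / p := fun i => rfl
  have hca : ∀ i, c1 i = p - 1 := fun i => rfl
  have hkey : ∀ i, α i + β i = p * (α i / p) + (p - 1) := by
    intro i
    have h1 := Nat.div_add_mod (α i) p
    have h2 := Nat.mod_lt (α i) hppos
    rw [hβa]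
    omega
  have hsumeq : α + β = p • δ0 + c1 := by
    ext i
    simp only [Finsupp.add_apply, Finsupp.smul_apply, smul_eq_mul]
    rw [hkey i, hδa, hca]
  set m : ℕ := ∑ i ∈ F, δ0 i with hm
  -- arithmetic: ∑ F α + ∑ F β = p * m + d * (p - 1)
  have hAB : (∑ i ∈ F, α i) + (∑ i ∈ F, β i) = m * p + d * (p - 1) := by
    have h2 : ∑ i ∈ F, (α i + β i) = ∑ i ∈ F, (p * (α i / p) + (p - 1)) :=
      Finset.sum_congr rfl (fun i _ => hkey i)
    rw [Finset.sum_add_distrib, Finset.sum_add_distrib] at h2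
    rw [h2, ← Finset.mul_sum, Finset.sum_const, hcard, smul_eq_mul, hm, mul_comm]
    congr 2
  have hB : m * p + 1 ≤ ∑ i ∈ F, β i := by
    have := hlt  -- ∑ α < d * (p-1)
    omega
  -- w := x^β is in I^(mp+1)
  have hw := monomial_mem_pow (k := k) d (m * p + 1) β hB
  have hTr := hs m (MvPolynomial.monomial β 1) hw
  -- coefficient of δ0 in Tr (s * x^β) is coeff α s ≠ 0
  have hcoeff : MvPolynomial.coeff δ0 (Tr p (s * MvPolynomial.monomial β 1)) =
      MvPolynomial.coeff α s := by
    rw [coeff_Tr hppos, ← hc1, ← hsumeq]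
    rw [MvPolynomial.coeff_mul_monomial α β 1 s, mul_one]
  have hne : MvPolynomial.coeff δ0 (Tr p (s * MvPolynomial.monomial β 1)) ≠ 0 := by
    rw [hcoeff]
    exact MvPolynomial.mem_support_iff.mp hα
  have hδmem : δ0 ∈ (Tr p (s * MvPolynomial.monomial β 1)).support :=
    MvPolynomial.mem_support_iff.mpr hne
  have := wt_ge_of_mem_pow (k := k) d (m + 1) _ hTr δ0 hδmem
  rw [← hF, ← hm] at this
  omega
end

section
/- Let k be a field and f ∈ k[x_1,…,x_n] a polynomial having residual normal crossings with respect to the ordered variables x_1,…,x_n. Then the monomial x_1·x_2⋯x_n occurs in f with nonzero coefficient, and every multi-exponent γ in the support of f satisfies γ ≥ (1,1,…,1) in the lexicographic order on ℕ^n in which the coordinate corresponding to x_1 is compared first (i.e. the ordering of monomials with x_n < x_{n-1} < ⋯ < x_1); in other words, the minimal term of f in this lexicographic order is precisely x_1⋯x_n. -/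
open MvPolynomial

/-! Write `f = x₁ g`. Exponents of `g` with positive `x₁`-degree are lexicographically larger
than every exponent in which `x₁` does not occur, while those with `x₁`-degree `0` are exactly
the exponents of `g(0, x₂, …, xₙ)`, whose least exponent is `x₂⋯xₙ` by induction on the list of
variables. Multiplying by `x₁` shifts all exponents by `e₁`, which preserves the order. -/

namespace MvPolynomial

variable {R σ : Type*} [CommSemiring R] [DecidableEq σ]

theorem aeval_ite_eq_zero_monomial (z : σ) (u : σ →₀ ℕ) (c : R) :
    aeval (fun w => if w = z then (0 : MvPolynomial σ R) else X w) (monomial u c) =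
      if u z = 0 then monomial u c else 0 := by
  rw [aeval_monomial, algebraMap_eq]
  split_ifs with hu
  · rw [monomial_eq]
    congr 1
    refine Finsupp.prod_congr fun w hw => ?_
    rw [if_neg]
    rintro rfl
    exact Finsupp.mem_support_iff.mp hw hu
  · rw [Finsupp.prod, Finset.prod_eq_zero (Finsupp.mem_support_iff.mpr hu) (by simp [hu]),
      mul_zero]

theorem coeff_aeval_ite_eq_zero (z : σ) (g : MvPolynomial σ R) (δ : σ →₀ ℕ) :
    coeff δ (aeval (fun w => if w = z then (0 : MvPolynomial σ R) else X w) g) =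
      if δ z = 0 then coeff δ g else 0 := by
  induction g using MvPolynomial.induction_on' with
  | monomial u c =>
    rw [aeval_ite_eq_zero_monomial]
    obtain rfl | hu := eq_or_ne u δ
    · split_ifs <;> simp
    · split_ifs <;> simp [coeff_monomial, hu]
  | add p q hp hq =>
    rw [map_add, coeff_add, hp, hq, coeff_add]
    split_ifs <;> simp

theorem mem_support_aeval_ite_eq_zero {z : σ} {g : MvPolynomial σ R} {δ : σ →₀ ℕ} :
    δ ∈ (aeval (fun w => if w = z then (0 : MvPolynomial σ R) else X w) g).support ↔
      δ z = 0 ∧ δ ∈ g.support := by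
  rw [mem_support_iff, mem_support_iff, coeff_aeval_ite_eq_zero]
  split_ifs <;> simp_all

end MvPolynomial

theorem Finsupp.toLex_lt_of_eq_zero_of_ne_zero {σ : Type*} [Preorder σ] {a b : σ →₀ ℕ} {z : σ}
    (ha : ∀ j ≤ z, a j = 0) (hb : ∀ j < z, b j = 0) (hz : b z ≠ 0) : toLex a < toLex b :=
  Finsupp.Lex.lt_iff.mpr ⟨z, fun j hj => (ha j hj.le).trans (hb j hj).symm,
    show a z < b z by rw [ha z le_rfl]; exact Nat.pos_of_ne_zero hz⟩

namespace MvPolynomial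

variable {R σ : Type*} [CommSemiring R] [LinearOrder σ]

def IsLexMinExponent (f : MvPolynomial σ R) (d : σ →₀ ℕ) : Prop :=
  coeff d f ≠ 0 ∧ ∀ γ ∈ f.support, toLex d ≤ toLex γ

theorem isLexMinExponent_zero {f : MvPolynomial σ R} (hf : f ≠ 0)
    (hsupp : ∀ γ ∈ f.support, γ = 0) : IsLexMinExponent f 0 := by
  obtain ⟨γ, hγ⟩ := support_nonempty.mpr hf
  exact ⟨hsupp γ hγ ▸ mem_support_iff.mp hγ, fun _ _ => bot_le⟩

theorem IsLexMinExponent.X_mul {z : σ} {g : MvPolynomial σ R} {d : σ →₀ ℕ}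
    (hd : ∀ j ≤ z, d j = 0) (hg : ∀ δ ∈ g.support, ∀ j < z, δ j = 0)
    (h : IsLexMinExponent (aeval (fun w => if w = z then (0 : MvPolynomial σ R) else X w) g) d) :
    IsLexMinExponent (X z * g) (Finsupp.single z 1 + d) := by
  refine ⟨?_, fun γ hγ => ?_⟩
  · rw [coeff_X_mul]
    simpa only [coeff_aeval_ite_eq_zero, hd z le_rfl, if_true] using h.1
  · obtain ⟨δ, hδ, rfl⟩ : ∃ δ ∈ g.support, Finsupp.single z 1 + δ = γ := by
      simpa using hγ
    suffices toLex d ≤ toLex δ from add_le_add_right this (toLex (Finsupp.single z 1))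
    by_cases hδz : δ z = 0
    · exact h.2 δ (mem_support_aeval_ite_eq_zero.mpr ⟨hδz, hδ⟩)
    · exact (Finsupp.toLex_lt_of_eq_zero_of_ne_zero hd (hg δ hδ) hδz).le

end MvPolynomial

theorem ResidualNormalCrossings.isLexMinExponent {k σ : Type*} [Field k] [LinearOrder σ]
    {L : List σ} (hL : L.Pairwise (· < ·)) {f : MvPolynomial σ k}
    (hf : ResidualNormalCrossings L f) (hvars : ∀ γ ∈ f.support, ∀ w, γ w ≠ 0 → w ∈ L) :
    f.IsLexMinExponent (Multiset.toFinsupp L) := by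
  induction L generalizing f with
  | nil =>
    refine isLexMinExponent_zero hf fun γ hγ => ?_
    ext w
    by_contra hw
    exact List.not_mem_nil (hvars γ hγ w hw)
  | cons z zs ih =>
    obtain ⟨hz, hzs⟩ := List.pairwise_cons.mp hL
    obtain ⟨g, rfl, hg⟩ := hf
    have hgvars : ∀ δ ∈ g.support, ∀ w, δ w ≠ 0 → w ∈ z :: zs := fun δ hδ w hw =>
      hvars (Finsupp.single z 1 + δ) (by rwa [mem_support_iff, coeff_X_mul, ← mem_support_iff])
        w (by rw [Finsupp.add_apply]; omega)
    rw [← Multiset.cons_coe, ← Multiset.singleton_add, Multiset.toFinsupp_add,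
      Multiset.toFinsupp_singleton]
    refine IsLexMinExponent.X_mul (fun j hj => ?_) (fun δ hδ j hj => ?_) (ih hzs hg ?_)
    · rw [Multiset.toFinsupp_apply, Multiset.coe_count, List.count_eq_zero_of_not_mem]
      exact fun hjzs => (hz j hjzs).not_ge hj
    · by_contra hδj
      rcases List.mem_cons.mp (hgvars δ hδ j hδj) with rfl | hjzs
      exacts [hj.false, (hz j hjzs).asymm hj]
    · intro δ hδ w hw
      obtain ⟨hδz, hδ⟩ := mem_support_aeval_ite_eq_zero.mp hδ
      exact (List.mem_cons.mp (hgvars δ hδ w hw)).resolve_left (by rintro rfl; exact hw hδz)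

/-- If `f ∈ k[x₁,…,xₙ]` has residual normal crossings with respect to the ordered
variables `x₁,…,xₙ`, then the monomial `x₁⋯xₙ` occurs in `f` with nonzero coefficient,
and every exponent `γ` in the support of `f` satisfies `(1,…,1) ≤ γ` in the
lexicographic order comparing the exponent of `x₁` first: the minimal term of `f`
in this order is precisely `x₁⋯xₙ`. -/
theorem residual_normal_crossings_minimal_term
    {k : Type*} [Field k] {n : ℕ} (f : MvPolynomial (Fin n) k)
    (hf : ResidualNormalCrossings (List.finRange n) f) :
    MvPolynomial.coeff (Finsupp.equivFunOnFinite.symm fun _ : Fin n => 1) f ≠ 0 ∧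
    ∀ γ ∈ f.support,
      toLex (Finsupp.equivFunOnFinite.symm fun _ : Fin n => (1 : ℕ)) ≤ toLex γ := by
  have hone : Multiset.toFinsupp (List.finRange n : Multiset (Fin n)) =
      Finsupp.equivFunOnFinite.symm fun _ => 1 := by
    ext i
    simp [Multiset.toFinsupp_apply, List.count_eq_one_of_mem (List.nodup_finRange n)]
  exact hone ▸ hf.isLexMinExponent (List.pairwise_lt_finRange n) fun _ _ w _ => List.mem_finRange w
end

section
/- Let k be a field, 0 ≤ m ≤ n, and let f, g ∈ k[x_1,…,x_n] be relatively prime polynomials involving only the variables x_{m+1},…,x_n. Then in k[x_1,…,x_n] one has the ideal equality (x_1,…,x_m, f·g) = (x_1,…,x_m, f) ∩ (x_1,…,x_m, g). -/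
open MvPolynomial


section Aux
variable {k : Type*} [Field k] {n : ℕ} {m : ℕ}

noncomputable def killLow (k : Type*) [Field k] (n m : ℕ) :
    MvPolynomial (Fin n) k →ₐ[k] MvPolynomial {i : Fin n // m ≤ (i : ℕ)} k :=
  aeval (fun i => if h : m ≤ (i : ℕ) then X ⟨i, h⟩ else 0)

lemma killLow_rename (q : MvPolynomial {i : Fin n // m ≤ (i : ℕ)} k) :
    killLow k n m (rename Subtype.val q) = q := by
  rw [killLow, aeval_rename]
  convert aeval_X_left_apply q
  funext i
  simp [Function.comp, i.2]

lemma sub_rename_killLow_mem (p : MvPolynomial (Fin n) k) :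
    p - rename Subtype.val (killLow k n m p) ∈
      Ideal.span ((fun i : Fin n => (X i : MvPolynomial (Fin n) k)) ''
        {i : Fin n | (i : ℕ) < m}) := by
  induction p using MvPolynomial.induction_on with
  | C a => simp [killLow]
  | add p q hp hq =>
      have := Ideal.add_mem _ hp hq
      convert this using 1
      simp [map_add]
      ring
  | mul_X p i hp =>
      by_cases h : m ≤ (i : ℕ)
      · have : p * X i - rename Subtype.val (killLow k n m (p * X i)) =
            (p - rename Subtype.val (killLow k n m p)) * X i := by
          simp [killLow, h, map_mul]
          ring
        rw [this]
        exact Ideal.mul_mem_right _ _ hp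
      · have h2 : killLow k n m (p * X i) = 0 := by
          simp [killLow, h]
        rw [h2, map_zero, sub_zero]
        exact Ideal.mul_mem_left _ _ (Ideal.subset_span ⟨i, by simpa using Nat.lt_of_not_le h, rfl⟩)
end Aux

section Aux2
variable {k : Type*} [Field k] {n : ℕ} {m : ℕ}

lemma killLow_span_zero {z : MvPolynomial (Fin n) k}
    (hz : z ∈ Ideal.span ((fun i : Fin n => (X i : MvPolynomial (Fin n) k)) ''
        {i : Fin n | (i : ℕ) < m})) : killLow k n m z = 0 := by
  have : Ideal.span ((fun i : Fin n => (X i : MvPolynomial (Fin n) k)) ''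
        {i : Fin n | (i : ℕ) < m}) ≤ RingHom.ker (killLow k n m).toRingHom := by
    rw [Ideal.span_le]
    rintro _ ⟨i, hi, rfl⟩
    simp only [SetLike.mem_coe, RingHom.mem_ker]
    simp [killLow, Nat.not_le.mpr hi]
  exact this hz

lemma mem_span_insert_rename (h₀ : MvPolynomial {i : Fin n // m ≤ (i : ℕ)} k)
    (p : MvPolynomial (Fin n) k) :
    p ∈ Ideal.span (insert (rename Subtype.val h₀)
        ((fun i : Fin n => (X i : MvPolynomial (Fin n) k)) '' {i : Fin n | (i : ℕ) < m})) ↔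
      h₀ ∣ killLow k n m p := by
  constructor
  · intro hp
    obtain ⟨a, z, hz, rfl⟩ := Ideal.mem_span_insert.mp hp
    rw [map_add, map_mul, killLow_span_zero hz, add_zero, killLow_rename]
    exact Dvd.intro_left _ rfl
  · rintro ⟨b, hb⟩
    rw [Ideal.mem_span_insert]
    refine ⟨rename Subtype.val b, p - rename Subtype.val (killLow k n m p), ?_, ?_⟩
    · exact sub_rename_killLow_mem p
    · rw [hb, map_mul, mul_comm]
      ring
end Aux2


/-- Let `k` be a field, `0 ≤ m ≤ n`, and `f, g ∈ k[x₁,…,xₙ]` relatively prime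
polynomials involving only the variables `x_{m+1},…,xₙ`.  Then
`(x₁,…,x_m, f·g) = (x₁,…,x_m, f) ∩ (x₁,…,x_m, g)`. -/
theorem span_vars_mul_eq_inf
    {k : Type*} [Field k] {n : ℕ} (m : ℕ) (hm : m ≤ n)
    (f g : MvPolynomial (Fin n) k)
    (hf : f ∈ Set.range
      (MvPolynomial.rename (Subtype.val : {i : Fin n // m ≤ (i : ℕ)} → Fin n) :
        MvPolynomial {i : Fin n // m ≤ (i : ℕ)} k → MvPolynomial (Fin n) k))
    (hg : g ∈ Set.range
      (MvPolynomial.rename (Subtype.val : {i : Fin n // m ≤ (i : ℕ)} → Fin n) :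
        MvPolynomial {i : Fin n // m ≤ (i : ℕ)} k → MvPolynomial (Fin n) k))
    (hfg : IsRelPrime f g) :
    Ideal.span (insert (f * g)
        ((fun i : Fin n => (X i : MvPolynomial (Fin n) k)) '' {i : Fin n | (i : ℕ) < m})) =
      Ideal.span (insert f
        ((fun i : Fin n => (X i : MvPolynomial (Fin n) k)) '' {i : Fin n | (i : ℕ) < m})) ⊓
      Ideal.span (insert g
        ((fun i : Fin n => (X i : MvPolynomial (Fin n) k)) '' {i : Fin n | (i : ℕ) < m})) := by
  obtain ⟨f₀, rfl⟩ := hf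
  obtain ⟨g₀, rfl⟩ := hg
  have hrp : IsRelPrime f₀ g₀ := by
    intro d hd1 hd2
    have hu : IsUnit (rename (Subtype.val : {i : Fin n // m ≤ (i : ℕ)} → Fin n) d) :=
      hfg (map_dvd _ hd1) (map_dvd _ hd2)
    have := hu.map (killLow k n m)
    rwa [killLow_rename] at this
  ext p
  rw [Ideal.mem_inf, ← map_mul, mem_span_insert_rename, mem_span_insert_rename,
    mem_span_insert_rename]
  exact ⟨fun h => ⟨(dvd_mul_right _ _).trans h, (dvd_mul_left _ _).trans h⟩,
    fun ⟨h1, h2⟩ => hrp.mul_dvd h1 h2⟩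
end

section
/- Let R be a commutative ring, n ≥ 1, and let A and U be n × n matrices over R with U upper triangular (U_{ij} = 0 whenever i > j). Then for every 1 ≤ i ≤ n, the determinant of the i × i submatrix of A·U on the last i rows and the first i columns equals the determinant of the i × i submatrix of A on the last i rows and the first i columns, multiplied by U_{11}·U_{22}⋯U_{ii}. In particular, the lower-left i × i minors of a matrix are, up to the factor ∏_{j≤i} U_{jj}, invariant under right multiplication by upper triangular matrices. -/
/-!
Because `U` is upper triangular, the first `i` columns of `A * U` only involve the first `i`
columns of `A`, mixed by the leading `i × i` block of `U`. So the lower-left minor of `A * U`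
is that of `A` times the determinant of this triangular block, the product of its diagonal.
-/

namespace Matrix

variable {ι l m R : Type*}

theorem IsUpperTriangular.submatrix_of_strictMono [Zero R] [Preorder ι] [Preorder m]
    {U : Matrix m m R} (hU : U.IsUpperTriangular) {f : ι → m} (hf : StrictMono f) :
    (U.submatrix f f).IsUpperTriangular :=
  fun _ _ h ↦ hU (hf h)

theorem mul_submatrix_of_isUpperTriangular [NonUnitalNonAssocSemiring R] [Fintype ι]
    [Fintype m] [LinearOrder m] [LinearOrder ι] (A : Matrix l m R) {U : Matrix m m R}
    (hU : U.IsUpperTriangular) (g : ι → l) {f : ι → m} (hf : StrictMono f)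
    (hf' : IsLowerSet (Set.range f)) :
    (A * U).submatrix g f = A.submatrix g f * U.submatrix f f := by
  ext r c
  refine (Fintype.sum_of_injective f hf.injective _ _ (fun k hk ↦ ?_) fun _ ↦ rfl).symm
  have hck : f c < k := lt_of_not_ge fun hkc ↦ hk (hf' hkc ⟨c, rfl⟩)
  simp [hU hck]

end Matrix

open Matrix in
/-- Let `R` be a commutative ring, `n ≥ 1`, and `A`, `U` be `n × n` matrices over `R`
with `U` upper triangular.  Then for every `1 ≤ i ≤ n`, the determinant of the `i × i`
submatrix of `A * U` on the last `i` rows and first `i` columns equals the determinant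
of the `i × i` submatrix of `A` on the last `i` rows and first `i` columns, times
`U₁₁ ⋯ U_{ii}`. -/
theorem lower_left_minor_mul_upper_triangular
    {R : Type*} [CommRing R] {n : ℕ}
    (A U : Matrix (Fin n) (Fin n) R)
    (hU : ∀ i j : Fin n, j < i → U i j = 0)
    (i : ℕ) (hin : i ≤ n) :
    Matrix.det (Matrix.of fun r c : Fin i =>
        (A * U) ⟨n - i + r.1, by have := r.isLt; omega⟩ ⟨c.1, by have := c.isLt; omega⟩) =
      Matrix.det (Matrix.of fun r c : Fin i =>
        A ⟨n - i + r.1, by have := r.isLt; omega⟩ ⟨c.1, by have := c.isLt; omega⟩) *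
      ∏ j : Fin i, U ⟨j.1, by have := j.isLt; omega⟩ ⟨j.1, by have := j.isLt; omega⟩ := by
  have hUT : U.IsUpperTriangular := fun a b h ↦ hU a b h
  have hcols : IsLowerSet (Set.range (Fin.castLE hin)) := by
    rw [Fin.range_castLE]
    exact fun _ _ hle hb ↦ Nat.lt_of_le_of_lt hle hb
  let rows : Fin i → Fin n := fun r ↦ ⟨n - i + r.1, by omega⟩
  change ((A * U).submatrix rows (Fin.castLE hin)).det =
    (A.submatrix rows (Fin.castLE hin)).det * ∏ j, U (Fin.castLE hin j) (Fin.castLE hin j)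
  rw [mul_submatrix_of_isUpperTriangular A hUT rows (Fin.strictMono_castLE hin) hcols, det_mul,
    det_of_isUpperTriangular (hUT.submatrix_of_strictMono (Fin.strictMono_castLE hin))]
  rfl
end

section
/- For every 1 ≤ i ≤ 2n-1, the lower-left i × i minor δ_i(M) of the 2n × 2n matrix M equals det L_i. -/
open MvPolynomial

/-- The entry of the `2n × 2n` matrix `M` in row `r` and column `c` (0-indexed):
odd-numbered columns (`c` even) read `x_{n-1-r, c/2}` (for `r < n`) and
`x_{r-n, c/2}` (for `r ≥ n`); even-numbered columns (`c` odd) read `0` (for `r < n`)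
and `y_{r-n, c/2}` (for `r ≥ n`). -/
noncomputable def Ment (k : Type*) [Field k] (n r c : ℕ) : MvPolynomial (Vars n) k :=
  if c % 2 = 0 then
    (if r < n then ent k n (n - 1 - r) (c / 2) false else ent k n (r - n) (c / 2) false)
  else
    (if r < n then 0 else ent k n (r - n) (c / 2) true)

/-- `δ_i(M)`: the determinant of the `i × i` submatrix of `M` on the last `i` rows and
the first `i` columns. -/
noncomputable def deltaM (k : Type*) [Field k] (n i : ℕ) : MvPolynomial (Vars n) k :=
  Matrix.det (Matrix.of fun a b : Fin i => Ment k n (2 * n - i + a.1) b.1)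

-- helper lemmas
lemma ent_self (k : Type*) [Field k] (n r : ℕ) (b : Bool) : ent k n r r b = 1 := by
  unfold ent
  rw [dif_neg (by omega), if_pos rfl]

lemma ent_of_lt (k : Type*) [Field k] {n r j : ℕ} (b : Bool) (h : r < j) :
    ent k n r j b = 0 := by
  unfold ent
  rw [dif_neg (by omega), if_neg (by omega)]

lemma succAbove_val {M : ℕ} (p : Fin (M+1)) (r : Fin M) :
    (p.succAbove r).1 = if r.1 < p.1 then r.1 else r.1 + 1 := by
  rw [Fin.succAbove]
  split_ifs with h h' h' <;> simp_all [Fin.lt_def]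

lemma det_fin_cast {R : Type*} [CommRing R] {a b : ℕ} (h : a = b) (f : ℕ → ℕ → R) :
    (Matrix.of fun r c : Fin a => f r.1 c.1).det
      = (Matrix.of fun r c : Fin b => f r.1 c.1).det := by subst h; rfl

noncomputable def Aent (k : Type*) [Field k] (n m s r c : ℕ) : MvPolynomial (Vars n) k :=
  if r < m - s then (if c % 2 = 0 then ent k n (m - 1 - r) (s + c / 2) false else 0)
  else Lent k n (r + 2 * s - m) (2 * s + c)

lemma step (k : Type*) [Field k] (n m s N : ℕ) (hs : s < m) (hm : m < n) (hn : 2 ≤ n)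
    (hN : n + m - 2 * s = N + 2) :
    (Matrix.of fun r c : Fin (N+2) => Aent k n m s r.1 c.1).det
      = (Matrix.of fun r c : Fin N => Aent k n m (s+1) r.1 c.1).det := by
  have hrow1 : m - 1 - s < N + 2 := by omega
  rw [Matrix.det_succ_row _ ⟨m - 1 - s, hrow1⟩]
  rw [Finset.sum_eq_single_of_mem (0 : Fin (N+2)) (Finset.mem_univ _) ?side1]
  case side1 =>
    intro j _ hj
    have hjv : j.1 ≠ 0 := fun hv => hj (Fin.ext hv)
    have : (Matrix.of fun r c : Fin (N+2) => Aent k n m s r.1 c.1) ⟨m-1-s, hrow1⟩ j = 0 := by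
      show Aent k n m s (m-1-s) j.1 = 0
      unfold Aent
      rw [if_pos (by omega)]
      rcases Nat.mod_two_eq_zero_or_one j.1 with h2 | h2
      · rw [if_pos h2]
        have he : m - 1 - (m - 1 - s) = s := by omega
        rw [he]
        exact ent_of_lt k false (by omega)
      · rw [if_neg (by omega)]
    rw [this]; ring
  have hA0 : (Matrix.of fun r c : Fin (N+2) => Aent k n m s r.1 c.1) ⟨m-1-s, hrow1⟩ 0 = 1 := by
    show Aent k n m s (m-1-s) 0 = 1
    unfold Aent
    rw [if_pos (by omega), if_pos (by norm_num)]
    have he : m - 1 - (m - 1 - s) = s := by omega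
    simp [he, ent_self]
  rw [hA0]
  -- rewrite the first minor
  have hB : ((Matrix.of fun r c : Fin (N+2) => Aent k n m s r.1 c.1).submatrix
      (Fin.succAbove ⟨m-1-s, hrow1⟩) (Fin.succAbove 0))
      = (Matrix.of fun r c : Fin (N+1) =>
          (fun (r c : ℕ) => Aent k n m s (if r < m-1-s then r else r + 1) (c+1)) r.1 c.1) := by
    ext r c
    simp only [Matrix.submatrix_apply, Matrix.of_apply]
    rw [succAbove_val, succAbove_val]
    simp
  rw [hB]
  have hrow2 : m - 1 - s < N + 1 := by omega
  rw [Matrix.det_succ_row _ ⟨m - 1 - s, hrow2⟩]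
  rw [Finset.sum_eq_single_of_mem (0 : Fin (N+1)) (Finset.mem_univ _) ?side2]
  case side2 =>
    intro j _ hj
    have hjv : j.1 ≠ 0 := fun hv => hj (Fin.ext hv)
    have : Aent k n m s (if m-1-s < m-1-s then m-1-s else (m-1-s) + 1) (j.1+1) = 0 := by
      rw [if_neg (by omega)]
      unfold Aent
      rw [if_neg (by omega)]
      unfold Lent
      apply ent_of_lt
      have : m - 1 - s + 1 + 2 * s - m = s := by omega
      rw [this]
      omega
    simp only [Matrix.of_apply, this]
    ring
  have hB0 : Aent k n m s (if m-1-s < m-1-s then m-1-s else (m-1-s) + 1) (0+1) = 1 := by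
    rw [if_neg (by omega)]
    unfold Aent
    rw [if_neg (by omega)]
    unfold Lent
    have h1 : m - 1 - s + 1 + 2 * s - m = s := by omega
    have h2 : (2 * s + (0 + 1)) / 2 = s := by omega
    have h3 : (2 * s + (0 + 1)) % 2 = 1 := by omega
    rw [h1, h2, h3]
    simp [ent_self]
  simp only [Matrix.of_apply, Fin.val_zero] at hB0 ⊢
  rw [hB0]
  -- rewrite the second minor
  have hC : ((Matrix.of fun r c : Fin (N+1) =>
        (fun (r c : ℕ) => Aent k n m s (if r < m-1-s then r else r + 1) (c+1)) r.1 c.1).submatrix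
      (Fin.succAbove ⟨m-1-s, hrow2⟩) (Fin.succAbove 0))
      = (Matrix.of fun r c : Fin N => Aent k n m (s+1) r.1 c.1) := by
    ext r c
    simp only [Matrix.submatrix_apply, Matrix.of_apply]
    rw [succAbove_val, succAbove_val]
    simp only [Fin.val_zero, Nat.not_lt_zero, if_false]
    by_cases hr : r.1 < m - 1 - s
    · rw [if_pos hr, if_pos hr]
      unfold Aent
      rw [if_pos (show r.1 < m - s by omega), if_pos (show r.1 < m - (s+1) by omega)]
      rcases Nat.mod_two_eq_zero_or_one c.1 with h2 | h2
      · rw [if_pos (show (c.1 + 1 + 1) % 2 = 0 by omega), if_pos h2]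
        have he : s + (c.1 + 1 + 1) / 2 = s + 1 + c.1 / 2 := by omega
        rw [he]
      · rw [if_neg (show ¬ (c.1 + 1 + 1) % 2 = 0 by omega), if_neg (by omega)]
    · rw [if_neg hr, if_neg (by omega)]
      unfold Aent
      rw [if_neg (show ¬ r.1 + 1 + 1 < m - s by omega),
        if_neg (show ¬ r.1 < m - (s+1) by omega)]
      unfold Lent
      have h1 : r.1 + 1 + 1 + 2 * s - m = r.1 + 2 * (s+1) - m := by omega
      have h2 : 2 * s + (c.1 + 1 + 1) = 2 * (s+1) + c.1 := by omega
      rw [h1, h2]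
  rw [hC]
  simp only [Fin.val_zero, Nat.add_zero, mul_one, one_mul]
  rw [← mul_assoc, ← pow_add]
  rw [Even.neg_one_pow ⟨m - 1 - s, rfl⟩, one_mul]

lemma descent (k : Type*) [Field k] (n m : ℕ) (hm1 : 1 ≤ m) (hm2 : m < n) (hn : 2 ≤ n) :
    (Matrix.of fun r c : Fin (n+m) => Aent k n m 0 r.1 c.1).det
      = (Matrix.of fun r c : Fin (n-m) => Aent k n m m r.1 c.1).det := by
  have key : ∀ j, j ≤ m →
      (Matrix.of fun r c : Fin (n+m-2*(m-j)) => Aent k n m (m-j) r.1 c.1).det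
        = (Matrix.of fun r c : Fin (n-m) => Aent k n m m r.1 c.1).det := by
    intro j
    induction j with
    | zero =>
      intro _
      rw [det_fin_cast (show n+m-2*(m-0) = n-m by omega)]
      norm_num
    | succ j ih =>
      intro hj
      have h1 : m - (j+1) < m := by omega
      rw [det_fin_cast (show n+m-2*(m-(j+1)) = (n+m-2*(m-j)) + 2 by omega)]
      rw [step k n m (m-(j+1)) (n+m-2*(m-j)) h1 hm2 hn (by omega)]
      rw [show m-(j+1)+1 = m-j by omega]
      exact ih (by omega)
  have := key m le_rfl
  rw [show m - m = 0 by omega] at this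
  rw [det_fin_cast (show n+m = n+m-2*0 by omega)]
  exact this

/-- For every `1 ≤ i ≤ 2n-1`, the lower-left `i × i` minor `δ_i(M)` of the `2n × 2n`
matrix `M` equals `det L_i`. -/
theorem deltaM_eq_detL {k : Type*} [Field k] (n : ℕ) (hn : 2 ≤ n)
    (i : ℕ) (hi1 : 1 ≤ i) (hi2 : i ≤ 2 * n - 1) :
    deltaM k n i = detL k n i := by
  rcases le_or_gt i n with hcase | hcase
  · -- case i ≤ n : the two matrices are entrywise equal
    have h : i = sz n i := by unfold sz; omega
    unfold deltaM detL Lmat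
    rw [← Matrix.det_submatrix_equiv_self (finCongr h)]
    congr 1
    ext a b
    have ha : a.1 < i := a.2
    simp only [Matrix.submatrix_apply, Matrix.of_apply, finCongr_apply, Fin.coe_cast]
    unfold Ment Lent roff coff
    have h0 : i - n = 0 := by omega
    rw [h0]
    have hr : ¬ (2 * n - i + a.1 < n) := by omega
    simp only [Nat.mul_zero, Nat.zero_add, Nat.add_zero]
    rcases Nat.mod_two_eq_zero_or_one b.1 with hb | hb
    · rw [if_pos hb, if_neg hr, hb]
      norm_num
      rw [show 2 * n - i + a.1 - n = n - i + a.1 by omega]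
    · rw [if_neg (by omega), if_neg hr, hb]
      norm_num
      rw [show 2 * n - i + a.1 - n = n - i + a.1 by omega]
  · -- case n < i
    obtain ⟨m, rfl⟩ : ∃ m, i = n + m := ⟨i - n, by omega⟩
    have hm1 : 1 ≤ m := by omega
    have hm2 : m < n := by omega
    unfold deltaM
    have L1 : (Matrix.of fun a b : Fin (n+m) => Ment k n (2 * n - (n+m) + a.1) b.1)
        = (Matrix.of fun r c : Fin (n+m) => Aent k n m 0 r.1 c.1) := by
      ext a b
      simp only [Matrix.of_apply]
      unfold Ment Aent Lent
      have e0 : 2 * n - (n+m) + a.1 = n - m + a.1 := by omega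
      rw [e0]
      by_cases haa : a.1 < m
      · have hlt : n - m + a.1 < n := by omega
        rw [if_pos (show a.1 < m - 0 by omega)]
        rcases Nat.mod_two_eq_zero_or_one b.1 with hb | hb
        · rw [if_pos hb, if_pos hlt, if_pos hb]
          have e1 : n - 1 - (n - m + a.1) = m - 1 - a.1 := by omega
          have e2 : (0 : ℕ) + b.1 / 2 = b.1 / 2 := by omega
          rw [e1, e2]
        · rw [if_neg (by omega), if_pos hlt, if_neg (by omega)]
      · have hlt : ¬ (n - m + a.1 < n) := by omega
        rw [if_neg (show ¬ a.1 < m - 0 by omega)]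
        have e1 : n - m + a.1 - n = a.1 - m := by omega
        have e2 : a.1 + 2 * 0 - m = a.1 - m := by omega
        have e3 : 2 * 0 + b.1 = b.1 := by omega
        rw [e1, e2, e3]
        rcases Nat.mod_two_eq_zero_or_one b.1 with hb | hb
        · rw [if_pos hb, if_neg hlt]
          have : decide (b.1 % 2 = 1) = false := by simp [hb]
          rw [this]
        · rw [if_neg (by omega), if_neg hlt]
          have : decide (b.1 % 2 = 1) = true := by simp [hb]
          rw [this]
    rw [L1, descent k n m hm1 hm2 hn]
    unfold detL Lmat
    have h : n - m = sz n (n + m) := by unfold sz; omega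
    rw [← Matrix.det_submatrix_equiv_self (finCongr h)]
    congr 1
    ext r c
    simp only [Matrix.submatrix_apply, Matrix.of_apply, finCongr_apply, Fin.coe_cast]
    unfold Aent
    rw [if_neg (show ¬ r.1 < m - m by omega)]
    unfold roff coff
    have e1 : r.1 + 2 * m - m = (n - (n+m)) + ((n+m) - n) + r.1 := by omega
    have e2 : 2 * m + c.1 = 2 * ((n+m) - n) + c.1 := by omega
    rw [e1, e2]
end

section
/- For every 1 ≤ i ≤ 2n-1, det L_i ∈ I_Δ^{μ(i)}, where μ(i) = min(⌊i/2⌋, ⌊(2n-i)/2⌋) and I_Δ is the ideal of R generated by the differences y_{ij} − x_{ij} for 1 ≤ j < i ≤ n (with the convention I_Δ^0 = R). -/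
open MvPolynomial

/-- The ideal `I_Δ` of the diagonal of `U⁻ × U⁻`: the ideal generated by the
differences `y_{rj} - x_{rj}` for `0 ≤ j < r < n`. -/
noncomputable def Idelta (k : Type*) [Field k] (n : ℕ) : Ideal (MvPolynomial (Vars n) k) :=
  Ideal.span (Set.range fun v : {v : ℕ × ℕ // v.2 < v.1 ∧ v.1 < n} =>
    (X (⟨v, true⟩ : Vars n) - X (⟨v, false⟩ : Vars n) : MvPolynomial (Vars n) k))

/-!
In each pair of adjacent columns `x_{·j}, y_{·j}` of `L` the entries differ by elements of `I_Δ`.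
Since every `L_i` starts at an even column of `L`, its columns `2m, 2m+1` form such a pair.
Subtracting column `2m` from column `2m+1` does not change the determinant and leaves
`⌊size/2⌋ = μ(i)` columns with entries in `I_Δ`; every term of the Leibniz expansion then
lies in `I_Δ^{μ(i)}`.
-/

theorem Fin.card_filter_odd (s : ℕ) :
    (Finset.univ.filter fun c : Fin s => c.1 % 2 = 1).card = s / 2 := by
  rw [← Finset.card_range (s / 2)]
  refine Finset.card_bij' (fun c _ => c.1 / 2)
    (fun b hb => ⟨2 * b + 1, by simp only [Finset.mem_range] at hb; omega⟩) ?_ ?_ ?_ ?_ <;>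
    simp only [Finset.mem_filter, Finset.mem_univ, true_and, Finset.mem_range, Fin.ext_iff] <;>
    omega

namespace Matrix

variable {R : Type*} [CommRing R]

theorem det_mem_pow_of_col_mem {ι : Type*} [Fintype ι] [DecidableEq ι] (M : Matrix ι ι R)
    (I : Ideal R) (T : Finset ι) (hT : ∀ r, ∀ c ∈ T, M r c ∈ I) :
    M.det ∈ I ^ T.card := by
  rw [det_apply]
  refine Ideal.sum_mem _ fun σ _ => ?_
  rw [Units.smul_def, zsmul_eq_mul, ← Finset.prod_filter_mul_prod_filter_not Finset.univ (· ∈ T),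
    Finset.filter_mem_eq_inter, Finset.univ_inter, ← Finset.prod_const]
  exact Ideal.mul_mem_left _ _ (Ideal.mul_mem_right _ _
    (Ideal.prod_mem_prod fun c hc => hT (σ c) c hc))

theorem det_mem_pow_half_of_sub_mem {s : ℕ} (M : Matrix (Fin s) (Fin s) R) (I : Ideal R)
    (h : ∀ r (a c : Fin s), a.1 % 2 = 0 → c.1 = a.1 + 1 → M r c - M r a ∈ I) :
    M.det ∈ I ^ (s / 2) := by
  -- right multiplication by `1 - N` subtracts each even column from the odd column after it
  let N : Matrix (Fin s) (Fin s) R := of fun a c => if a.1 % 2 = 0 ∧ c.1 = a.1 + 1 then 1 else 0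
  have hdet : (1 - N).det = 1 := by
    rw [det_of_isUpperTriangular]
    · refine Finset.prod_eq_one fun a _ => ?_
      simp [N]
    · intro a c hca
      simp only [id, Fin.lt_def] at hca
      have hac : a ≠ c := Fin.ne_of_val_ne (by omega)
      simp only [sub_apply, one_apply_ne hac, N, of_apply]
      rw [if_neg (by omega), sub_zero]
  have hcol : ∀ r (c : Fin s), c.1 % 2 = 1 → (M * (1 - N)) r c ∈ I := by
    intro r c hc
    have hc0 : c.1 - 1 < s := by omega
    have hsum : ∑ a, M r a * N a c = M r ⟨c.1 - 1, hc0⟩ := by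
      rw [Finset.sum_eq_single ⟨c.1 - 1, hc0⟩]
      · simp only [N, of_apply]
        rw [if_pos (by omega), mul_one]
      · intro a _ ha
        simp only [N, of_apply]
        rw [if_neg (fun hac => ha (Fin.ext (by simp only; omega))), mul_zero]
      · simp
    rw [mul_sub, mul_one, sub_apply, mul_apply, hsum]
    exact h r _ c (by simp only; omega) (by simp only; omega)
  rw [← mul_one M.det, ← hdet, ← det_mul, ← Fin.card_filter_odd]
  exact det_mem_pow_of_col_mem _ I _ fun r c hc => hcol r c (Finset.mem_filter.1 hc).2

end Matrix

theorem Lent_sub_mem_Idelta (k : Type*) [Field k] (n r j : ℕ) :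
    Lent k n r (2 * j + 1) - Lent k n r (2 * j) ∈ Idelta k n := by
  have hodd : (2 * j + 1) / 2 = j ∧ (2 * j + 1) % 2 = 1 := by omega
  have heven : 2 * j / 2 = j ∧ ¬ 2 * j % 2 = 1 := by omega
  simp only [Lent, ent, hodd, heven, decide_true, decide_false]
  split_ifs with h
  · exact Ideal.subset_span ⟨⟨(r, j), h.1, h.2⟩, rfl⟩
  all_goals simp

theorem detL_mem_Idelta_pow_general {k : Type*} [Field k] (n : ℕ)
    (i : ℕ) :
    detL k n i ∈ Idelta k n ^ min (i / 2) ((2 * n - i) / 2) := by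
  have hsz : min (i / 2) ((2 * n - i) / 2) = sz n i / 2 := by unfold sz; omega
  rw [hsz]
  refine Matrix.det_mem_pow_half_of_sub_mem _ _ fun r a c ha hc => ?_
  obtain ⟨j, hj⟩ : ∃ j, coff n i + a.1 = 2 * j := ⟨(coff n i + a.1) / 2, by unfold coff; omega⟩
  have hj' : coff n i + c.1 = 2 * j + 1 := by omega
  simpa only [Lmat, Matrix.of_apply, hj, hj'] using Lent_sub_mem_Idelta k n _ j

/-- For every `1 ≤ i ≤ 2n-1`, `det L_i ∈ I_Δ^{μ(i)}` where
`μ(i) = min (⌊i/2⌋) (⌊(2n-i)/2⌋)`. -/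
theorem detL_mem_Idelta_pow {k : Type*} [Field k] (n : ℕ) (hn : 2 ≤ n)
    (i : ℕ) (hi1 : 1 ≤ i) (hi2 : i ≤ 2 * n - 1) :
    detL k n i ∈ Idelta k n ^ min (i / 2) ((2 * n - i) / 2) :=
  detL_mem_Idelta_pow_general n i
end

section
/- For every 1 ≤ i ≤ 2n-1, the difference det L_i − m_i lies in the ideal of R generated by the variables in V_1 ∪ V_2 ∪ ⋯ ∪ V_{i-1} (this ideal being the zero ideal when i = 1); that is, det L_i ≡ m_i modulo M_1 + ⋯ + M_{i-1}, where M_j is the monomial ideal generated by V_j. -/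
open MvPolynomial

/-- The monomial `m_i`, the product of the elements of `V_i` (the diagonal entries
of `L_i` are precisely the variables of `V_i` together with constant entries `1`,
so `m_i` is the product of the diagonal entries of `L_i`). -/
noncomputable def mdiag (k : Type*) [Field k] (n i : ℕ) : MvPolynomial (Vars n) k :=
  ∏ r : Fin (sz n i), Lmat k n i r r

/-- Modulo an ideal containing every entry below the diagonal, a matrix is upper triangular. -/
theorem Matrix.det_sub_prod_diag_mem {R ι : Type*} [CommRing R] [Fintype ι] [DecidableEq ι]
    [LinearOrder ι] (M : Matrix ι ι R) (I : Ideal R) (h : ∀ r c, c < r → M r c ∈ I) :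
    M.det - ∏ r, M r r ∈ I := by
  rw [← Ideal.Quotient.eq, RingHom.map_det, map_prod]
  exact Matrix.det_of_isUpperTriangular fun r c hcr =>
    Ideal.Quotient.eq_zero_iff_mem.2 (h r c hcr)

lemma ent_eq_X_of_lt {k : Type*} [Field k] {n r j : ℕ} (b : Bool) (hj : j < r) (hr : r < n) :
    ∃ v, ent k n r j b = X v :=
  ⟨_, dif_pos ⟨hj, hr⟩⟩

lemma Lmat_eq_X_of_lt {k : Type*} [Field k] {n i : ℕ} {r c : Fin (sz n i)} (hcr : c < r) :
    ∃ v, Lmat k n i r c = X v := by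
  have hr : r.1 < min i (2 * n - i) := r.2
  have hc : c.1 < r.1 := hcr
  exact ent_eq_X_of_lt _ (by simp only [roff, coff]; omega) (by simp only [roff]; omega)

/-- The entry of `L_i` in position `(r, c)` with `c < r` sits on the diagonal of
`L_{i - r + c}`. -/
lemma Lmat_eq_diag_of_lt {k : Type*} [Field k] {n i : ℕ} {r c : Fin (sz n i)} (hcr : c < r) :
    ∃ j ∈ Set.Ico 1 i, ∃ s : Fin (sz n j), Lmat k n i r c = Lmat k n j s s := by
  have hr : r.1 < min i (2 * n - i) := r.2
  have hc : c.1 < r.1 := hcr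
  refine ⟨i - r + c, ⟨by omega, by omega⟩, ⟨roff n i + r - roff n (i - r + c), ?_⟩, ?_⟩
  · simp only [sz, roff]; omega
  · simp only [Lmat, Matrix.of_apply]
    congr 1 <;> simp only [roff, coff] <;> omega

theorem detL_congr_mdiag_general {k : Type*} [Field k] (n : ℕ)
    (i : ℕ) :
    detL k n i - mdiag k n i ∈
      Ideal.span ((fun v : Vars n => (X v : MvPolynomial (Vars n) k)) ''
        (⋃ j ∈ Set.Ico 1 i, Vset k n j)) := by
  refine (Lmat k n i).det_sub_prod_diag_mem _ fun r c hcr => ?_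
  obtain ⟨j, hj, s, hdiag⟩ := Lmat_eq_diag_of_lt (k := k) hcr
  obtain ⟨v, hv⟩ := Lmat_eq_X_of_lt (k := k) hcr
  exact Ideal.subset_span ⟨v, Set.mem_biUnion hj ⟨s, hdiag ▸ hv⟩, hv.symm⟩

/-- For every `1 ≤ i ≤ 2n-1`, `det L_i ≡ m_i` modulo the ideal `M_1 + ⋯ + M_{i-1}`
generated by the variables in `V_1 ∪ ⋯ ∪ V_{i-1}` (the zero ideal when `i = 1`). -/
theorem detL_congr_mdiag {k : Type*} [Field k] (n : ℕ) (hn : 2 ≤ n)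
    (i : ℕ) (hi1 : 1 ≤ i) (hi2 : i ≤ 2 * n - 1) :
    detL k n i - mdiag k n i ∈
      Ideal.span ((fun v : Vars n => (X v : MvPolynomial (Vars n) k)) ''
        (⋃ j ∈ Set.Ico 1 i, Vset k n j)) :=
  detL_congr_mdiag_general n i
end
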